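/- arXiv:2603.25294 — 6 statements merged into one kernel-verified Lean document; each statement's English description precedes it below -/
import Mathlib

section
/- Every bounded operator T on L²(τ) satisfying T∘L_a = L_a∘T for all a ∈ A is of the form T = R_ξ for a unique ξ ∈ L^∞(τ), namely ξ = T(1); conversely, every R_ξ with ξ ∈ L^∞(τ) commutes with every L_a. Consequently {L_a : a ∈ A}′ = {R_ξ : ξ ∈ L^∞(τ)}, and symmetrically {R_a : a ∈ A}′ = {L_ξ : ξ ∈ L^∞(τ)}. -/
/-!
Since `T` commutes with left multiplications, `T a = a·ξ` with `ξ = T 1`, so the point is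
that `ξ` is bounded from the right. By the trace property
`⟪c, ξ·a⟫ = τ(c* ξ a) = τ(a c* ξ) = ⟪a*, c*·ξ⟫ = ⟪a*, T c*⟫`,
so `|⟪c, ξ·a⟫| ≤ ‖T‖ ‖a‖₂ ‖c‖₂` (the involution being `L²`-isometric), and density gives
`‖ξ·a‖ ≤ ‖T‖ ‖a‖₂`. The remaining assertions are density arguments; for right multiplications
nothing needs to be estimated, since there `ξ·a = T a`.
-/

open scoped InnerProductSpace

/-- The set of numbers `‖ξ·a‖` over contractions `a` (w.r.t. the `L²`-norm `τ(a*a)^{1/2}`),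
whose supremum is the `L^∞`-norm of `ξ ∈ L²(τ)`.  Here `Rmul a` is the continuous extension of
right multiplication by `a`, so that `Rmul a ξ = ξ·a`. -/
def infNormSet {A H : Type*} [NormedRing A] [StarRing A] [NormedAlgebra ℂ A]
    [NormedAddCommGroup H] [InnerProductSpace ℂ H]
    (τ : A →ₗ[ℂ] ℂ) (Rmul : A → H →L[ℂ] H) (ξ : H) : Set ℝ :=
  {r : ℝ | ∃ a : A, (τ (star a * a)).re ≤ 1 ∧ r = ‖Rmul a ξ‖}

/-- `ξ ∈ L^∞(τ)`, i.e. `‖ξ‖_∞ < ∞`. -/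
def MemLinfty {A H : Type*} [NormedRing A] [StarRing A] [NormedAlgebra ℂ A]
    [NormedAddCommGroup H] [InnerProductSpace ℂ H]
    (τ : A →ₗ[ℂ] ℂ) (Rmul : A → H →L[ℂ] H) (ξ : H) : Prop :=
  BddAbove (infNormSet τ Rmul ξ)

theorem DenseRange.continuousLinearMap_ext {α 𝕜 E F : Type*} [Semiring 𝕜]
    [TopologicalSpace E] [AddCommMonoid E] [Module 𝕜 E]
    [TopologicalSpace F] [T2Space F] [AddCommMonoid F] [Module 𝕜 F] {f : α → E} (hf : DenseRange f) {S₁ S₂ : E →L[𝕜] F}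
    (h : ∀ a, S₁ (f a) = S₂ (f a)) : S₁ = S₂ :=
  DFunLike.coe_injective (hf.equalizer S₁.continuous S₂.continuous (funext h))

theorem DenseRange.norm_le_of_forall_norm_inner_le {α 𝕜 E : Type*} [RCLike 𝕜]
    [NormedAddCommGroup E] [InnerProductSpace 𝕜 E] {f : α → E} (hf : DenseRange f) {v : E}
    {C : ℝ} (hC : 0 ≤ C) (h : ∀ a, ‖⟪f a, v⟫_𝕜‖ ≤ C * ‖f a‖) :
    ‖v‖ ≤ C := by
  have hv : ‖⟪v, v⟫_𝕜‖ ≤ C * ‖v‖ :=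
    hf.induction_on (p := fun x => ‖⟪x, v⟫_𝕜‖ ≤ C * ‖x‖) v
      (isClosed_le (by fun_prop) (by fun_prop)) h
  rw [inner_self_eq_norm_sq_to_K, norm_pow, RCLike.norm_ofReal, abs_norm] at hv
  nlinarith [norm_nonneg v]

/-! An action `P` of a monoid `M` on `H` with `P a (ι b) = ι (a * b)` for a map `ι` of dense
range. Left multiplication is such an action of `A`, right multiplication one of `Aᵐᵒᵖ`. -/
section CyclicAction

variable {M 𝕜 H : Type*} [Monoid M] [Semiring 𝕜] [TopologicalSpace H] [AddCommMonoid H]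
  [Module 𝕜 H] {ι : M → H} {P : M → H →L[𝕜] H}

theorem apply_eq_of_commute (hP : ∀ a b, P a (ι b) = ι (a * b)) {T : H →L[𝕜] H}
    (hT : ∀ a, T.comp (P a) = (P a).comp T) (a : M) : T (ι a) = P a (T (ι 1)) := by
  simpa [hP] using DFunLike.congr_fun (hT a) (ι 1)

variable [T2Space H]

theorem map_mul_eq_comp (hι : DenseRange ι) (hP : ∀ a b, P a (ι b) = ι (a * b)) (a b : M) :
    P (a * b) = (P a).comp (P b) :=
  hι.continuousLinearMap_ext fun c => by simp only [ContinuousLinearMap.comp_apply, hP, mul_assoc]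

theorem map_one_eq_id (hι : DenseRange ι) (hP : ∀ a b, P a (ι b) = ι (a * b)) :
    P 1 = ContinuousLinearMap.id 𝕜 H :=
  hι.continuousLinearMap_ext fun c => by simp [hP]

theorem commute_of_apply_eq (hι : DenseRange ι) (hP : ∀ a b, P a (ι b) = ι (a * b))
    {S : H →L[𝕜] H} {ξ : H} (hS : ∀ a, S (ι a) = P a ξ) (a : M) :
    S.comp (P a) = (P a).comp S :=
  hι.continuousLinearMap_ext fun c => by
    simp only [ContinuousLinearMap.comp_apply, hP, hS, map_mul_eq_comp hι hP]

theorem eq_apply_one_of_apply_eq (hι : DenseRange ι) (hP : ∀ a b, P a (ι b) = ι (a * b))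
    {S : H →L[𝕜] H} {ξ : H} (hS : ∀ a, S (ι a) = P a ξ) : ξ = S (ι 1) := by
  rw [hS, map_one_eq_id hι hP, ContinuousLinearMap.id_apply]

end CyclicAction

section TracialGNS

variable {A H : Type*} [NormedRing A] [StarRing A] [NormedAlgebra ℂ A]
  [NormedAddCommGroup H] [InnerProductSpace ℂ H] {τ : A →ₗ[ℂ] ℂ} {ι : A →ₗ[ℂ] H}

theorem norm_sq_eq_re_trace (hinner : ∀ a b : A, ⟪ι a, ι b⟫_ℂ = τ (star a * b)) (a : A) :
    ‖ι a‖ ^ 2 = (τ (star a * a)).re := by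
  rw [← hinner, inner_self_eq_norm_sq_to_K]
  norm_cast

theorem norm_star_eq (hinner : ∀ a b : A, ⟪ι a, ι b⟫_ℂ = τ (star a * b))
    (hτtr : ∀ a b : A, τ (a * b) = τ (b * a)) (a : A) : ‖ι (star a)‖ = ‖ι a‖ := by
  have h := norm_sq_eq_re_trace hinner (star a)
  rw [star_star, hτtr, ← norm_sq_eq_re_trace hinner] at h
  exact (pow_left_inj₀ (norm_nonneg _) (norm_nonneg _) two_ne_zero).mp h

theorem memLinfty_of_norm_le (hinner : ∀ a b : A, ⟪ι a, ι b⟫_ℂ = τ (star a * b))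
    {Rmul : A → H →L[ℂ] H} {ξ : H} {C : ℝ} (hC : 0 ≤ C)
    (h : ∀ a, ‖Rmul a ξ‖ ≤ C * ‖ι a‖) :
    MemLinfty τ Rmul ξ := by
  refine ⟨C, ?_⟩
  rintro _ ⟨a, ha, rfl⟩
  have hι : ‖ι a‖ ≤ 1 := by
    rwa [← sq_le_one_iff₀ (norm_nonneg _), norm_sq_eq_re_trace hinner]
  exact (h a).trans (mul_le_of_le_one_right hC hι)

variable {Lmul Rmul : A → H →L[ℂ] H}

theorem inner_Rmul_apply (hdense : DenseRange ι)
    (hinner : ∀ a b : A, ⟪ι a, ι b⟫_ℂ = τ (star a * b))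
    (hτtr : ∀ a b : A, τ (a * b) = τ (b * a))
    (hLmul : ∀ a b : A, Lmul a (ι b) = ι (a * b))
    (hRmul : ∀ a b : A, Rmul a (ι b) = ι (b * a))
    (a c : A) (ξ : H) : ⟪ι c, Rmul a ξ⟫_ℂ = ⟪ι (star a), Lmul (star c) ξ⟫_ℂ := by
  refine hdense.induction_on ξ (isClosed_eq (by fun_prop) (by fun_prop)) fun b => ?_
  rw [hRmul, hLmul, hinner, hinner, star_star, ← mul_assoc, hτtr]

theorem norm_Rmul_apply_le (hdense : DenseRange ι)
    (hinner : ∀ a b : A, ⟪ι a, ι b⟫_ℂ = τ (star a * b))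
    (hτtr : ∀ a b : A, τ (a * b) = τ (b * a))
    (hLmul : ∀ a b : A, Lmul a (ι b) = ι (a * b))
    (hRmul : ∀ a b : A, Rmul a (ι b) = ι (b * a))
    {T : H →L[ℂ] H} (hT : ∀ a, T.comp (Lmul a) = (Lmul a).comp T) (a : A) :
    ‖Rmul a (T (ι 1))‖ ≤ ‖T‖ * ‖ι a‖ := by
  refine hdense.norm_le_of_forall_norm_inner_le (𝕜 := ℂ) (by positivity) fun c => ?_
  rw [inner_Rmul_apply hdense hinner hτtr hLmul hRmul, ← apply_eq_of_commute hLmul hT]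
  calc ‖⟪ι (star a), T (ι (star c))⟫_ℂ‖
      ≤ ‖ι (star a)‖ * (‖T‖ * ‖ι (star c)‖) :=
        (norm_inner_le_norm _ _).trans (by gcongr; exact T.le_opNorm _)
    _ = ‖T‖ * ‖ι a‖ * ‖ι c‖ := by
        rw [norm_star_eq hinner hτtr, norm_star_eq hinner hτtr]; ring

theorem commutant_Rmul_eq (hdense : DenseRange ι)
    (hinner : ∀ a b : A, ⟪ι a, ι b⟫_ℂ = τ (star a * b))
    (hRmul : ∀ a b : A, Rmul a (ι b) = ι (b * a)) :
    {T : H →L[ℂ] H | ∀ a : A, T.comp (Rmul a) = (Rmul a).comp T}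
      = {T : H →L[ℂ] H | ∃ ξ : H, MemLinfty τ Rmul ξ ∧ ∀ a : A, T (ι a) = Rmul a ξ} := by
  have hdense' : DenseRange (ι ∘ MulOpposite.unop) := by
    rwa [DenseRange, MulOpposite.unop_surjective.range_comp]
  have hRmul' : ∀ a b : Aᵐᵒᵖ, Rmul a.unop ((ι ∘ MulOpposite.unop) b) =
      (ι ∘ MulOpposite.unop) (a * b) := fun a b => hRmul _ _
  ext T
  constructor
  · intro hT
    have hTa : ∀ a : A, T (ι a) = Rmul a (T (ι 1)) := fun a =>
      apply_eq_of_commute hRmul' (fun b => hT b.unop) (MulOpposite.op a)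
    refine ⟨T (ι 1), memLinfty_of_norm_le hinner (norm_nonneg T) fun a => ?_, hTa⟩
    rw [← hTa]
    exact T.le_opNorm _
  · rintro ⟨ξ, -, hξ⟩ a
    exact commute_of_apply_eq hdense' hRmul' (fun b => hξ b.unop) (MulOpposite.op a)

end TracialGNS

theorem statement0_general
    {A H : Type*} [NormedRing A] [StarRing A] [NormedAlgebra ℂ A]
    [NormedAddCommGroup H] [InnerProductSpace ℂ H]
    (τ : A →ₗ[ℂ] ℂ)
    (hτtr : ∀ a b : A, τ (a * b) = τ (b * a))
    (ι : A →ₗ[ℂ] H) (hdense : DenseRange ι)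
    (hinner : ∀ a b : A, (inner ℂ (ι a) (ι b) : ℂ) = τ (star a * b))
    (Lmul Rmul : A → H →L[ℂ] H)
    (hLmul : ∀ a b : A, Lmul a (ι b) = ι (a * b))
    (hRmul : ∀ a b : A, Rmul a (ι b) = ι (b * a)) :
    (∀ T : H →L[ℂ] H, (∀ a : A, T.comp (Lmul a) = (Lmul a).comp T) →
      MemLinfty τ Rmul (T (ι 1)) ∧ (∀ a : A, T (ι a) = Lmul a (T (ι 1))) ∧
      (∀ ξ : H, MemLinfty τ Rmul ξ → (∀ a : A, T (ι a) = Lmul a ξ) → ξ = T (ι 1))) ∧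
    (∀ ξ : H, MemLinfty τ Rmul ξ → ∀ Rxi : H →L[ℂ] H, (∀ a : A, Rxi (ι a) = Lmul a ξ) →
      ∀ a : A, Rxi.comp (Lmul a) = (Lmul a).comp Rxi) ∧
    {T : H →L[ℂ] H | ∀ a : A, T.comp (Lmul a) = (Lmul a).comp T}
      = {T : H →L[ℂ] H | ∃ ξ : H, MemLinfty τ Rmul ξ ∧ ∀ a : A, T (ι a) = Lmul a ξ} ∧
    {T : H →L[ℂ] H | ∀ a : A, T.comp (Rmul a) = (Rmul a).comp T}
      = {T : H →L[ℂ] H | ∃ ξ : H, MemLinfty τ Rmul ξ ∧ ∀ a : A, T (ι a) = Rmul a ξ} := by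
  have hbounded : ∀ T : H →L[ℂ] H, (∀ a, T.comp (Lmul a) = (Lmul a).comp T) →
      MemLinfty τ Rmul (T (ι 1)) := fun T hT =>
    memLinfty_of_norm_le hinner (norm_nonneg T)
      (norm_Rmul_apply_le hdense hinner hτtr hLmul hRmul hT)
  refine ⟨fun T hT => ⟨hbounded T hT, apply_eq_of_commute hLmul hT,
      fun ξ _ hξ => eq_apply_one_of_apply_eq hdense hLmul hξ⟩,
    fun ξ _ Rxi hRxi => commute_of_apply_eq hdense hLmul hRxi, ?_,
    commutant_Rmul_eq hdense hinner hRmul⟩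
  ext T
  exact ⟨fun hT => ⟨T (ι 1), hbounded T hT, apply_eq_of_commute hLmul hT⟩,
    fun ⟨ξ, _, hξ⟩ => commute_of_apply_eq hdense hLmul hξ⟩

/-- Every bounded operator `T` on `L²(τ)` commuting with all left multiplications
`L_a` is of the form `R_ξ` for a unique `ξ ∈ L^∞(τ)`, namely `ξ = T(1)`; conversely every `R_ξ`
with `ξ ∈ L^∞(τ)` commutes with every `L_a`.  Consequently `{L_a}' = {R_ξ : ξ ∈ L^∞(τ)}` and
symmetrically `{R_a}' = {L_ξ : ξ ∈ L^∞(τ)}` (where `L_ξ(a) = ξ·a = Rmul a ξ` and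
`R_ξ(a) = a·ξ = Lmul a ξ`). -/
theorem statement0
    {A H : Type*} [NormedRing A] [StarRing A] [CStarRing A] [NormedAlgebra ℂ A]
    [StarModule ℂ A] [CompleteSpace A]
    [NormedAddCommGroup H] [InnerProductSpace ℂ H] [CompleteSpace H]
    (τ : A →ₗ[ℂ] ℂ)
    (hτpos : ∀ a : A, 0 ≤ (τ (star a * a)).re ∧ (τ (star a * a)).im = 0)
    (hτone : τ 1 = 1)
    (hτtr : ∀ a b : A, τ (a * b) = τ (b * a))
    (ι : A →ₗ[ℂ] H) (hdense : DenseRange ι)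
    (hinner : ∀ a b : A, (inner ℂ (ι a) (ι b) : ℂ) = τ (star a * b))
    (Lmul Rmul : A → H →L[ℂ] H)
    (hLmul : ∀ a b : A, Lmul a (ι b) = ι (a * b))
    (hRmul : ∀ a b : A, Rmul a (ι b) = ι (b * a)) :
    (∀ T : H →L[ℂ] H, (∀ a : A, T.comp (Lmul a) = (Lmul a).comp T) →
      MemLinfty τ Rmul (T (ι 1)) ∧ (∀ a : A, T (ι a) = Lmul a (T (ι 1))) ∧
      (∀ ξ : H, MemLinfty τ Rmul ξ → (∀ a : A, T (ι a) = Lmul a ξ) → ξ = T (ι 1))) ∧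
    (∀ ξ : H, MemLinfty τ Rmul ξ → ∀ Rxi : H →L[ℂ] H, (∀ a : A, Rxi (ι a) = Lmul a ξ) →
      ∀ a : A, Rxi.comp (Lmul a) = (Lmul a).comp Rxi) ∧
    {T : H →L[ℂ] H | ∀ a : A, T.comp (Lmul a) = (Lmul a).comp T}
      = {T : H →L[ℂ] H | ∃ ξ : H, MemLinfty τ Rmul ξ ∧ ∀ a : A, T (ι a) = Lmul a ξ} ∧
    {T : H →L[ℂ] H | ∀ a : A, T.comp (Rmul a) = (Rmul a).comp T}
      = {T : H →L[ℂ] H | ∃ ξ : H, MemLinfty τ Rmul ξ ∧ ∀ a : A, T (ι a) = Rmul a ξ} :=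
  statement0_general τ hτtr ι hdense hinner Lmul Rmul hLmul hRmul
end

section
/- Equipped with the product ξη := L_ξ(η), the involution ξ ↦ ξ*, the unit given by the image of 1 ∈ A, and the norm ‖·‖_∞, the space L^∞(τ) is a unital C*-algebra: the product is associative and bilinear, (ξη)* = η*ξ*, the norm ‖·‖_∞ is complete and submultiplicative, and the C*-identity ‖ξ*ξ‖_∞ = ‖ξ‖_∞² holds for all ξ ∈ L^∞(τ). -/
open scoped InnerProductSpace

/-- The `L^∞`-norm `‖ξ‖_∞` of `ξ ∈ L²(τ)`. -/
noncomputable def infNorm {A H : Type*} [NormedRing A] [StarRing A] [NormedAlgebra ℂ A]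
    [NormedAddCommGroup H] [InnerProductSpace ℂ H]
    (τ : A →ₗ[ℂ] ℂ) (Rmul : A → H →L[ℂ] H) (ξ : H) : ℝ :=
  sSup (infNormSet τ Rmul ξ)

/-!
The left multiplication `L_ξ` by `ξ ∈ L^∞(τ)` commutes with every right multiplication, and its
operator norm is exactly `‖ξ‖_∞`: both are the best constant `C` in `‖ξ·a‖ ≤ C ‖a‖₂`. Products
in `L^∞(τ)` thus become compositions of operators on `L²(τ)`, and the C*-identity is that of
`B(L²(τ))` once the trace property shows that the adjoint of `L_{ξ*}` is `L_ξ`. Completeness holds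
because `‖·‖_∞` dominates the `L²`-norm and is lower semicontinuous for `L²`-convergence.
-/

section

open Filter Topology ContinuousLinearMap

variable {A H : Type*} [NormedRing A] [NormedAlgebra ℂ A] [NormedAddCommGroup H]
  [InnerProductSpace ℂ H] {τ : A →ₗ[ℂ] ℂ} {ι : A →ₗ[ℂ] H} {Rmul : A → H →L[ℂ] H}

theorem Rmul_one_apply (hdense : DenseRange ι) (hRmul : ∀ a b : A, Rmul a (ι b) = ι (b * a))
    (x : H) : Rmul 1 x = x :=
  hdense.induction_on x (isClosed_eq (Rmul 1).continuous continuous_id) fun b => by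
    rw [hRmul, mul_one]

theorem Rmul_apply_Rmul (hdense : DenseRange ι) (hRmul : ∀ a b : A, Rmul a (ι b) = ι (b * a))
    (b c : A) (x : H) : Rmul b (Rmul c x) = Rmul (c * b) x :=
  hdense.induction_on x (isClosed_eq (by fun_prop) (by fun_prop)) fun d => by
    simp only [hRmul, mul_assoc]

theorem Rmul_smul_apply (hdense : DenseRange ι) (hRmul : ∀ a b : A, Rmul a (ι b) = ι (b * a))
    (c : ℂ) (a : A) (x : H) : Rmul (c • a) x = c • Rmul a x :=
  hdense.induction_on x (isClosed_eq (by fun_prop) (by fun_prop)) fun b => by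
    rw [hRmul, hRmul, mul_smul_comm, map_smul]

theorem apply_Rmul_comm (hdense : DenseRange ι) (hRmul : ∀ a b : A, Rmul a (ι b) = ι (b * a))
    {ζ : H} {L : H →L[ℂ] H} (hL : ∀ a, L (ι a) = Rmul a ζ) (b : A) (x : H) :
    L (Rmul b x) = Rmul b (L x) :=
  hdense.induction_on x (isClosed_eq (by fun_prop) (by fun_prop)) fun c => by
    rw [hRmul, hL, hL, Rmul_apply_Rmul hdense hRmul]

theorem norm_Rmul_le_of_tendsto {α : Type*} {l : Filter α} [l.NeBot] {f : α → H} {ξ : H}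
    (hf : Tendsto f l (𝓝 ξ)) {C : ℝ} (a : A) (h : ∀ᶠ n in l, ‖Rmul a (f n)‖ ≤ C * ‖ι a‖) :
    ‖Rmul a ξ‖ ≤ C * ‖ι a‖ :=
  le_of_tendsto (((Rmul a).continuous.tendsto ξ).comp hf).norm h

variable [StarRing A]

theorem re_τ_star_mul_self (hinner : ∀ a b : A, ⟪ι a, ι b⟫_ℂ = τ (star a * b)) (a : A) :
    (τ (star a * a)).re = ‖ι a‖ ^ 2 := by
  rw [← hinner, inner_self_eq_norm_sq_to_K]
  norm_cast

theorem Rmul_apply_eq_zero (hdense : DenseRange ι) (hRmul : ∀ a b : A, Rmul a (ι b) = ι (b * a))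
    (hinner : ∀ a b : A, ⟪ι a, ι b⟫_ℂ = τ (star a * b)) {a : A} (ha : ι a = 0) (x : H) :
    Rmul a x = 0 :=
  hdense.induction_on x (isClosed_eq (Rmul a).continuous continuous_const) fun b => by
    rw [hRmul, ← inner_self_eq_zero (𝕜 := ℂ), hinner, star_mul, mul_assoc, ← hinner, ha,
      inner_zero_left]

theorem inner_Rmul_left (hdense : DenseRange ι) (hRmul : ∀ a b : A, Rmul a (ι b) = ι (b * a))
    (hinner : ∀ a b : A, ⟪ι a, ι b⟫_ℂ = τ (star a * b)) (hτtr : ∀ a b : A, τ (a * b) = τ (b * a))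
    (b : A) (x y : H) : ⟪Rmul b x, y⟫_ℂ = ⟪x, Rmul (star b) y⟫_ℂ :=
  hdense.induction_on₂ (p := fun x y => ⟪Rmul b x, y⟫_ℂ = ⟪x, Rmul (star b) y⟫_ℂ)
    (isClosed_eq (by fun_prop) (by fun_prop)) (fun c d => by
      rw [hRmul, hRmul, hinner, hinner, star_mul, mul_assoc, hτtr, mul_assoc]) x y

theorem inner_J_J (hdense : DenseRange ι) (hinner : ∀ a b : A, ⟪ι a, ι b⟫_ℂ = τ (star a * b))
    (hτtr : ∀ a b : A, τ (a * b) = τ (b * a)) {J : H → H} (hJcont : Continuous J)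
    (hJstar : ∀ a : A, J (ι a) = ι (star a)) (x y : H) : ⟪J x, J y⟫_ℂ = ⟪y, x⟫_ℂ :=
  hdense.induction_on₂ (p := fun x y => ⟪J x, J y⟫_ℂ = ⟪y, x⟫_ℂ)
    (isClosed_eq (by fun_prop) (by fun_prop)) (fun a b => by
      rw [hJstar, hJstar, hinner, hinner, star_star, hτtr]) x y

theorem inner_J_right_comm (hdense : DenseRange ι)
    (hinner : ∀ a b : A, ⟪ι a, ι b⟫_ℂ = τ (star a * b)) (hτtr : ∀ a b : A, τ (a * b) = τ (b * a))
    {J : H → H} (hJcont : Continuous J) (hJinv : ∀ ξ : H, J (J ξ) = ξ)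
    (hJstar : ∀ a : A, J (ι a) = ι (star a)) (x y : H) : ⟪x, J y⟫_ℂ = ⟪y, J x⟫_ℂ := by
  conv_lhs => rw [← hJinv x]
  exact inner_J_J hdense hinner hτtr hJcont hJstar (J x) y

theorem inner_ι_apply_eq (hdense : DenseRange ι) (hRmul : ∀ a b : A, Rmul a (ι b) = ι (b * a))
    (hinner : ∀ a b : A, ⟪ι a, ι b⟫_ℂ = τ (star a * b)) (hτtr : ∀ a b : A, τ (a * b) = τ (b * a))
    {J : H → H} (hJcont : Continuous J) (hJstar : ∀ a : A, J (ι a) = ι (star a))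
    {ζ : H} {L : H →L[ℂ] H} (hL : ∀ a, L (ι a) = Rmul a ζ) (c : A) (x : H) :
    ⟪ι c, L x⟫_ℂ = ⟪J (Rmul (star c) x), ζ⟫_ℂ :=
  hdense.induction_on x (isClosed_eq (by fun_prop) (by fun_prop)) fun d => by
    rw [hL, hRmul, hJstar, star_mul, star_star, ← hRmul, inner_Rmul_left hdense hRmul hinner hτtr,
      star_star]

theorem J_apply_eq_apply_J (hdense : DenseRange ι)
    (hRmul : ∀ a b : A, Rmul a (ι b) = ι (b * a))
    (hinner : ∀ a b : A, ⟪ι a, ι b⟫_ℂ = τ (star a * b)) (hτtr : ∀ a b : A, τ (a * b) = τ (b * a))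
    {J : H → H} (hJcont : Continuous J) (hJinv : ∀ ξ : H, J (J ξ) = ξ)
    (hJstar : ∀ a : A, J (ι a) = ι (star a)) {ξ η : H} {Lξ Lη' : H →L[ℂ] H}
    (hLξ : ∀ a, Lξ (ι a) = Rmul a ξ) (hLη' : ∀ a, Lη' (ι a) = Rmul a (J η)) :
    J (Lξ η) = Lη' (J ξ) := by
  refine ext_inner_left ℂ fun v => hdense.induction_on v (isClosed_eq (by fun_prop) (by fun_prop))
    fun c => ?_
  have hJcomm := inner_J_right_comm hdense hinner hτtr hJcont hJinv hJstar
  calc ⟪ι c, J (Lξ η)⟫_ℂ = ⟪ξ, J (Rmul c η)⟫_ℂ := by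
        rw [hJcomm, hJstar, ← inner_conj_symm, ← star_star c,
          inner_ι_apply_eq hdense hRmul hinner hτtr hJcont hJstar hLξ, star_star, inner_conj_symm]
    _ = ⟪ι c, Lη' (J ξ)⟫_ℂ := by
        rw [inner_ι_apply_eq hdense hRmul hinner hτtr hJcont hJstar hLη',
          inner_J_J hdense hinner hτtr hJcont hJstar, ← inner_Rmul_left hdense hRmul hinner hτtr,
          hJcomm]

theorem adjoint_apply_ι [CompleteSpace H] (hdense : DenseRange ι)
    (hRmul : ∀ a b : A, Rmul a (ι b) = ι (b * a))
    (hinner : ∀ a b : A, ⟪ι a, ι b⟫_ℂ = τ (star a * b)) (hτtr : ∀ a b : A, τ (a * b) = τ (b * a))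
    {J : H → H} (hJcont : Continuous J) (hJstar : ∀ a : A, J (ι a) = ι (star a)) {ξ : H}
    {L : H →L[ℂ] H} (hL : ∀ a, L (ι a) = Rmul a (J ξ)) (a : A) :
    adjoint L (ι a) = Rmul a ξ := by
  refine ext_inner_left ℂ fun v => hdense.induction_on v (isClosed_eq (by fun_prop) (by fun_prop))
    fun b => ?_
  have hstar : a * star b = star (b * star a) := by rw [star_mul, star_star]
  rw [adjoint_inner_right, hL, inner_Rmul_left hdense hRmul hinner hτtr, hRmul, hstar, ← hJstar,
    inner_J_J hdense hinner hτtr hJcont hJstar, ← hRmul, inner_Rmul_left hdense hRmul hinner hτtr,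
    star_star]

theorem norm_ι_one (hinner : ∀ a b : A, ⟪ι a, ι b⟫_ℂ = τ (star a * b)) (hτone : τ 1 = 1) :
    ‖ι (1 : A)‖ = 1 := by
  have h := re_τ_star_mul_self hinner (1 : A)
  rw [star_one, mul_one, hτone, Complex.one_re] at h
  nlinarith [norm_nonneg (ι (1 : A))]

theorem norm_Rmul_mem_infNormSet (hinner : ∀ a b : A, ⟪ι a, ι b⟫_ℂ = τ (star a * b)) {a : A}
    (ha : ‖ι a‖ ≤ 1) (ξ : H) : ‖Rmul a ξ‖ ∈ infNormSet τ Rmul ξ := by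
  refine ⟨a, ?_, rfl⟩
  rw [re_τ_star_mul_self hinner]
  nlinarith [norm_nonneg (ι a)]

theorem norm_mem_infNormSet (hdense : DenseRange ι) (hRmul : ∀ a b : A, Rmul a (ι b) = ι (b * a))
    (hinner : ∀ a b : A, ⟪ι a, ι b⟫_ℂ = τ (star a * b)) (hτone : τ 1 = 1) (ξ : H) :
    ‖ξ‖ ∈ infNormSet τ Rmul ξ := by
  simpa only [Rmul_one_apply hdense hRmul] using
    norm_Rmul_mem_infNormSet (Rmul := Rmul) hinner (norm_ι_one hinner hτone).le ξ

theorem MemLinfty.norm_le_infNorm (hdense : DenseRange ι)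
    (hRmul : ∀ a b : A, Rmul a (ι b) = ι (b * a))
    (hinner : ∀ a b : A, ⟪ι a, ι b⟫_ℂ = τ (star a * b)) (hτone : τ 1 = 1) {ξ : H}
    (hξ : MemLinfty τ Rmul ξ) : ‖ξ‖ ≤ infNorm τ Rmul ξ :=
  le_csSup hξ (norm_mem_infNormSet hdense hRmul hinner hτone ξ)

theorem MemLinfty.norm_Rmul_le (hdense : DenseRange ι)
    (hRmul : ∀ a b : A, Rmul a (ι b) = ι (b * a))
    (hinner : ∀ a b : A, ⟪ι a, ι b⟫_ℂ = τ (star a * b)) {ξ : H} (hξ : MemLinfty τ Rmul ξ)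
    (a : A) : ‖Rmul a ξ‖ ≤ infNorm τ Rmul ξ * ‖ι a‖ := by
  rcases eq_or_ne (ι a) 0 with h0 | h0
  · simp [Rmul_apply_eq_zero hdense hRmul hinner h0, h0]
  have hpos : 0 < ‖ι a‖ := norm_pos_iff.mpr h0
  -- normalise `a` to an `L²`-contraction
  have hunit : ‖ι ((‖ι a‖⁻¹ : ℂ) • a)‖ = 1 := by
    rw [map_smul, norm_smul, norm_inv, Complex.norm_real, Real.norm_of_nonneg hpos.le,
      inv_mul_cancel₀ hpos.ne']
  have hle := le_csSup hξ (norm_Rmul_mem_infNormSet hinner hunit.le ξ)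
  rw [Rmul_smul_apply hdense hRmul, norm_smul, norm_inv, Complex.norm_real,
    Real.norm_of_nonneg hpos.le, inv_mul_le_iff₀ hpos] at hle
  rwa [mul_comm] at hle

theorem mem_upperBounds_infNormSet_of_norm_Rmul_le (hdense : DenseRange ι)
    (hRmul : ∀ a b : A, Rmul a (ι b) = ι (b * a))
    (hinner : ∀ a b : A, ⟪ι a, ι b⟫_ℂ = τ (star a * b)) (hτone : τ 1 = 1) {ξ : H} {C : ℝ}
    (h : ∀ a, ‖Rmul a ξ‖ ≤ C * ‖ι a‖) : C ∈ upperBounds (infNormSet τ Rmul ξ) := by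
  have hC : 0 ≤ C := by
    have h1 := h 1
    rw [Rmul_one_apply hdense hRmul, norm_ι_one hinner hτone, mul_one] at h1
    exact (norm_nonneg ξ).trans h1
  rintro _ ⟨a, ha, rfl⟩
  rw [re_τ_star_mul_self hinner] at ha
  calc ‖Rmul a ξ‖ ≤ C * ‖ι a‖ := h a
    _ ≤ C * 1 := by gcongr; nlinarith [norm_nonneg (ι a)]
    _ = C := mul_one C

theorem memLinfty_and_infNorm_le_of_norm_Rmul_le (hdense : DenseRange ι)
    (hRmul : ∀ a b : A, Rmul a (ι b) = ι (b * a))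
    (hinner : ∀ a b : A, ⟪ι a, ι b⟫_ℂ = τ (star a * b)) (hτone : τ 1 = 1) {ξ : H} {C : ℝ}
    (h : ∀ a, ‖Rmul a ξ‖ ≤ C * ‖ι a‖) : MemLinfty τ Rmul ξ ∧ infNorm τ Rmul ξ ≤ C :=
  have hC := mem_upperBounds_infNormSet_of_norm_Rmul_le hdense hRmul hinner hτone h
  ⟨⟨C, hC⟩, csSup_le ⟨_, norm_mem_infNormSet hdense hRmul hinner hτone ξ⟩ hC⟩

theorem MemLinfty.infNorm_nonneg (hdense : DenseRange ι)
    (hRmul : ∀ a b : A, Rmul a (ι b) = ι (b * a))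
    (hinner : ∀ a b : A, ⟪ι a, ι b⟫_ℂ = τ (star a * b)) (hτone : τ 1 = 1) {ξ : H}
    (hξ : MemLinfty τ Rmul ξ) : 0 ≤ infNorm τ Rmul ξ :=
  (norm_nonneg ξ).trans (hξ.norm_le_infNorm hdense hRmul hinner hτone)

theorem MemLinfty.add_and_infNorm_add_le (hdense : DenseRange ι)
    (hRmul : ∀ a b : A, Rmul a (ι b) = ι (b * a))
    (hinner : ∀ a b : A, ⟪ι a, ι b⟫_ℂ = τ (star a * b)) (hτone : τ 1 = 1) {ξ η : H}
    (hξ : MemLinfty τ Rmul ξ) (hη : MemLinfty τ Rmul η) :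
    MemLinfty τ Rmul (ξ + η) ∧ infNorm τ Rmul (ξ + η) ≤ infNorm τ Rmul ξ + infNorm τ Rmul η :=
  memLinfty_and_infNorm_le_of_norm_Rmul_le hdense hRmul hinner hτone fun a =>
    calc ‖Rmul a (ξ + η)‖ ≤ ‖Rmul a ξ‖ + ‖Rmul a η‖ := by rw [map_add]; exact norm_add_le _ _
      _ ≤ (infNorm τ Rmul ξ + infNorm τ Rmul η) * ‖ι a‖ := by
        rw [add_mul]
        exact add_le_add (hξ.norm_Rmul_le hdense hRmul hinner a)
          (hη.norm_Rmul_le hdense hRmul hinner a)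

theorem MemLinfty.smul_and_infNorm_smul_le (hdense : DenseRange ι)
    (hRmul : ∀ a b : A, Rmul a (ι b) = ι (b * a))
    (hinner : ∀ a b : A, ⟪ι a, ι b⟫_ℂ = τ (star a * b)) (hτone : τ 1 = 1) {ξ : H}
    (hξ : MemLinfty τ Rmul ξ) (c : ℂ) :
    MemLinfty τ Rmul (c • ξ) ∧ infNorm τ Rmul (c • ξ) ≤ ‖c‖ * infNorm τ Rmul ξ :=
  memLinfty_and_infNorm_le_of_norm_Rmul_le hdense hRmul hinner hτone fun a => by
    rw [map_smul, norm_smul, mul_assoc]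
    exact mul_le_mul_of_nonneg_left (hξ.norm_Rmul_le hdense hRmul hinner a) (norm_nonneg c)

theorem MemLinfty.infNorm_smul (hdense : DenseRange ι)
    (hRmul : ∀ a b : A, Rmul a (ι b) = ι (b * a))
    (hinner : ∀ a b : A, ⟪ι a, ι b⟫_ℂ = τ (star a * b)) (hτone : τ 1 = 1) {ξ : H}
    (hξ : MemLinfty τ Rmul ξ) (c : ℂ) : infNorm τ Rmul (c • ξ) = ‖c‖ * infNorm τ Rmul ξ := by
  obtain ⟨hcξ, hle⟩ := hξ.smul_and_infNorm_smul_le hdense hRmul hinner hτone c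
  refine le_antisymm hle ?_
  rcases eq_or_ne c 0 with rfl | hc
  · simpa using hcξ.infNorm_nonneg hdense hRmul hinner hτone
  have hge := (hcξ.smul_and_infNorm_smul_le hdense hRmul hinner hτone c⁻¹).2
  rwa [smul_smul, inv_mul_cancel₀ hc, one_smul, norm_inv, le_inv_mul_iff₀ (norm_pos_iff.mpr hc)]
    at hge

theorem MemLinfty.sub (hdense : DenseRange ι) (hRmul : ∀ a b : A, Rmul a (ι b) = ι (b * a))
    (hinner : ∀ a b : A, ⟪ι a, ι b⟫_ℂ = τ (star a * b)) (hτone : τ 1 = 1) {ξ η : H}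
    (hξ : MemLinfty τ Rmul ξ) (hη : MemLinfty τ Rmul η) : MemLinfty τ Rmul (ξ - η) := by
  simpa [sub_eq_add_neg] using (hξ.add_and_infNorm_add_le hdense hRmul hinner hτone
    (hη.smul_and_infNorm_smul_le hdense hRmul hinner hτone (-1)).1).1

theorem memLinfty_and_infNorm_le_opNorm (hdense : DenseRange ι)
    (hRmul : ∀ a b : A, Rmul a (ι b) = ι (b * a))
    (hinner : ∀ a b : A, ⟪ι a, ι b⟫_ℂ = τ (star a * b)) (hτone : τ 1 = 1) {ξ : H}
    {L : H →L[ℂ] H} (hL : ∀ a, L (ι a) = Rmul a ξ) : MemLinfty τ Rmul ξ ∧ infNorm τ Rmul ξ ≤ ‖L‖ :=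
  memLinfty_and_infNorm_le_of_norm_Rmul_le hdense hRmul hinner hτone fun a => by
    rw [← hL]
    exact L.le_opNorm _

theorem infNorm_eq_opNorm (hdense : DenseRange ι) (hRmul : ∀ a b : A, Rmul a (ι b) = ι (b * a))
    (hinner : ∀ a b : A, ⟪ι a, ι b⟫_ℂ = τ (star a * b)) (hτone : τ 1 = 1) {ξ : H}
    {L : H →L[ℂ] H} (hL : ∀ a, L (ι a) = Rmul a ξ) : infNorm τ Rmul ξ = ‖L‖ := by
  obtain ⟨hξ, hle⟩ := memLinfty_and_infNorm_le_opNorm hdense hRmul hinner hτone hL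
  refine le_antisymm hle (L.opNorm_le_bound (hξ.infNorm_nonneg hdense hRmul hinner hτone)
    fun x => ?_)
  refine hdense.induction_on x (isClosed_le (by fun_prop) (by fun_prop)) fun a => ?_
  rw [hL]
  exact hξ.norm_Rmul_le hdense hRmul hinner a

theorem memLinfty_apply_and_infNorm_apply_le (hdense : DenseRange ι)
    (hRmul : ∀ a b : A, Rmul a (ι b) = ι (b * a))
    (hinner : ∀ a b : A, ⟪ι a, ι b⟫_ℂ = τ (star a * b)) (hτone : τ 1 = 1) {ξ η : H}
    (hη : MemLinfty τ Rmul η) {L : H →L[ℂ] H} (hL : ∀ a, L (ι a) = Rmul a ξ) :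
    MemLinfty τ Rmul (L η) ∧ infNorm τ Rmul (L η) ≤ infNorm τ Rmul ξ * infNorm τ Rmul η :=
  memLinfty_and_infNorm_le_of_norm_Rmul_le hdense hRmul hinner hτone fun a =>
    calc ‖Rmul a (L η)‖ = ‖L (Rmul a η)‖ := by rw [apply_Rmul_comm hdense hRmul hL]
      _ ≤ ‖L‖ * ‖Rmul a η‖ := L.le_opNorm _
      _ ≤ ‖L‖ * (infNorm τ Rmul η * ‖ι a‖) :=
        mul_le_mul_of_nonneg_left (hη.norm_Rmul_le hdense hRmul hinner a) (norm_nonneg L)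
      _ = infNorm τ Rmul ξ * infNorm τ Rmul η * ‖ι a‖ := by
        rw [infNorm_eq_opNorm hdense hRmul hinner hτone hL, mul_assoc]

theorem infNorm_apply_self_eq_sq [CompleteSpace H] (hdense : DenseRange ι)
    (hRmul : ∀ a b : A, Rmul a (ι b) = ι (b * a))
    (hinner : ∀ a b : A, ⟪ι a, ι b⟫_ℂ = τ (star a * b)) (hτone : τ 1 = 1)
    (hτtr : ∀ a b : A, τ (a * b) = τ (b * a)) {J : H → H} (hJcont : Continuous J)
    (hJstar : ∀ a : A, J (ι a) = ι (star a)) {ξ : H} {L : H →L[ℂ] H}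
    (hL : ∀ a, L (ι a) = Rmul a (J ξ)) : infNorm τ Rmul (L ξ) = infNorm τ Rmul ξ ^ 2 := by
  have hadj := adjoint_apply_ι hdense hRmul hinner hτtr hJcont hJstar hL
  have hcomp : ∀ a, (L ∘L adjoint L) (ι a) = Rmul a (L ξ) := fun a => by
    rw [comp_apply, hadj, apply_Rmul_comm hdense hRmul hL]
  rw [infNorm_eq_opNorm hdense hRmul hinner hτone hcomp,
    infNorm_eq_opNorm hdense hRmul hinner hτone hadj, sq]
  simpa only [adjoint_adjoint] using norm_adjoint_comp_self (adjoint L)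

theorem exists_memLinfty_tendsto_infNorm [CompleteSpace H] (hdense : DenseRange ι)
    (hRmul : ∀ a b : A, Rmul a (ι b) = ι (b * a))
    (hinner : ∀ a b : A, ⟪ι a, ι b⟫_ℂ = τ (star a * b)) (hτone : τ 1 = 1) {f : ℕ → H}
    (hf : ∀ n, MemLinfty τ Rmul (f n))
    (hcau : ∀ ε : ℝ, 0 < ε → ∃ N : ℕ, ∀ m n : ℕ, N ≤ m → N ≤ n → infNorm τ Rmul (f m - f n) < ε) :
    ∃ ξ : H, MemLinfty τ Rmul ξ ∧
      ∀ ε : ℝ, 0 < ε → ∃ N : ℕ, ∀ n : ℕ, N ≤ n → infNorm τ Rmul (f n - ξ) < ε := by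
  have hsub : ∀ m n, MemLinfty τ Rmul (f m - f n) := fun m n =>
    (hf m).sub hdense hRmul hinner hτone (hf n)
  obtain ⟨ξ, hlim⟩ : ∃ ξ, Tendsto f atTop (𝓝 ξ) := cauchySeq_tendsto_of_complete <|
    Metric.cauchySeq_iff.mpr fun ε hε => (hcau ε hε).imp fun N hN m hm n hn =>
      (dist_eq_norm (f m) (f n) ▸ (hsub m n).norm_le_infNorm hdense hRmul hinner hτone).trans_lt
        (hN m n hm hn)
  have hclose : ∀ ε : ℝ, 0 < ε → ∃ N : ℕ, ∀ n : ℕ, N ≤ n →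
      MemLinfty τ Rmul (f n - ξ) ∧ infNorm τ Rmul (f n - ξ) ≤ ε := fun ε hε =>
    (hcau ε hε).imp fun N hN n hn =>
      memLinfty_and_infNorm_le_of_norm_Rmul_le hdense hRmul hinner hτone fun a =>
        norm_Rmul_le_of_tendsto (tendsto_const_nhds.sub hlim) a <|
          (eventually_ge_atTop N).mono fun m hm =>
            ((hsub n m).norm_Rmul_le hdense hRmul hinner a).trans <|
              mul_le_mul_of_nonneg_right (hN n m hn hm).le (norm_nonneg _)
  refine ⟨ξ, ?_, fun ε hε => ?_⟩
  · obtain ⟨N, hN⟩ := hclose 1 one_pos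
    simpa using (hf N).sub hdense hRmul hinner hτone (hN N le_rfl).1
  · obtain ⟨N, hN⟩ := hclose (ε / 2) (half_pos hε)
    exact ⟨N, fun n hn => (hN n hn).2.trans_lt (half_lt_self hε)⟩

end

theorem statement5_general
    {A H : Type*} [NormedRing A] [StarRing A] [NormedAlgebra ℂ A]
    [NormedAddCommGroup H] [InnerProductSpace ℂ H] [CompleteSpace H]
    (τ : A →ₗ[ℂ] ℂ)
    (hτone : τ 1 = 1)
    (hτtr : ∀ a b : A, τ (a * b) = τ (b * a))
    (ι : A →ₗ[ℂ] H) (hdense : DenseRange ι)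
    (hinner : ∀ a b : A, (inner ℂ (ι a) (ι b) : ℂ) = τ (star a * b))
    (Rmul : A → H →L[ℂ] H)
    (hRmul : ∀ a b : A, Rmul a (ι b) = ι (b * a))
    (J : H → H)
    (hJadd : ∀ ξ η : H, J (ξ + η) = J ξ + J η)
    (hJiso : ∀ ξ : H, ‖J ξ‖ = ‖ξ‖)
    (hJinv : ∀ ξ : H, J (J ξ) = ξ)
    (hJstar : ∀ a : A, J (ι a) = ι (star a)) :
    -- the product is bilinear: linear in the right variable …
    (∀ ξ : H, MemLinfty τ Rmul ξ → ∀ Lxi : H →L[ℂ] H, (∀ a : A, Lxi (ι a) = Rmul a ξ) →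
      ∀ (c d : ℂ) (η ζ : H), Lxi (c • η + d • ζ) = c • Lxi η + d • Lxi ζ) ∧
    -- … and linear in the left variable
    (∀ ξ η : H, MemLinfty τ Rmul ξ → MemLinfty τ Rmul η →
      ∀ Lxi Leta Lcomb : H →L[ℂ] H,
        (∀ a : A, Lxi (ι a) = Rmul a ξ) → (∀ a : A, Leta (ι a) = Rmul a η) →
        ∀ c d : ℂ, (∀ a : A, Lcomb (ι a) = Rmul a (c • ξ + d • η)) →
        ∀ ζ : H, Lcomb ζ = c • Lxi ζ + d • Leta ζ) ∧
    -- the product is associative: (ξη)ζ = ξ(ηζ)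
    (∀ ξ η ζ : H, MemLinfty τ Rmul ξ → MemLinfty τ Rmul η → MemLinfty τ Rmul ζ →
      ∀ Lxi Leta Lprod : H →L[ℂ] H,
        (∀ a : A, Lxi (ι a) = Rmul a ξ) → (∀ a : A, Leta (ι a) = Rmul a η) →
        (∀ a : A, Lprod (ι a) = Rmul a (Lxi η)) →
        Lprod ζ = Lxi (Leta ζ)) ∧
    -- the involution is an anti-homomorphism: (ξη)* = η*ξ*
    (∀ ξ η : H, MemLinfty τ Rmul ξ → MemLinfty τ Rmul η →
      ∀ Lxi Lseta : H →L[ℂ] H,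
        (∀ a : A, Lxi (ι a) = Rmul a ξ) → (∀ a : A, Lseta (ι a) = Rmul a (J η)) →
        J (Lxi η) = Lseta (J ξ)) ∧
    -- the image of 1 ∈ A is a unit
    (MemLinfty τ Rmul (ι 1) ∧
      (∀ Lone : H →L[ℂ] H, (∀ a : A, Lone (ι a) = Rmul a (ι 1)) → ∀ ξ : H, Lone ξ = ξ) ∧
      (∀ ξ : H, MemLinfty τ Rmul ξ → ∀ Lxi : H →L[ℂ] H,
        (∀ a : A, Lxi (ι a) = Rmul a ξ) → Lxi (ι 1) = ξ)) ∧
    -- ‖·‖_∞ is a norm on L^∞(τ) …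
    (∀ ξ η : H, MemLinfty τ Rmul ξ → MemLinfty τ Rmul η →
      MemLinfty τ Rmul (ξ + η) ∧
      infNorm τ Rmul (ξ + η) ≤ infNorm τ Rmul ξ + infNorm τ Rmul η) ∧
    (∀ (c : ℂ) (ξ : H), MemLinfty τ Rmul ξ →
      MemLinfty τ Rmul (c • ξ) ∧ infNorm τ Rmul (c • ξ) = ‖c‖ * infNorm τ Rmul ξ) ∧
    (∀ ξ : H, MemLinfty τ Rmul ξ → 0 ≤ infNorm τ Rmul ξ ∧ (infNorm τ Rmul ξ = 0 → ξ = 0)) ∧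
    -- … which is submultiplicative …
    (∀ ξ η : H, MemLinfty τ Rmul ξ → MemLinfty τ Rmul η →
      ∀ Lxi : H →L[ℂ] H, (∀ a : A, Lxi (ι a) = Rmul a ξ) →
      MemLinfty τ Rmul (Lxi η) ∧
      infNorm τ Rmul (Lxi η) ≤ infNorm τ Rmul ξ * infNorm τ Rmul η) ∧
    -- … satisfies the C*-identity ‖ξ*ξ‖_∞ = ‖ξ‖_∞² …
    (∀ ξ : H, MemLinfty τ Rmul ξ →
      ∀ Lsxi : H →L[ℂ] H, (∀ a : A, Lsxi (ι a) = Rmul a (J ξ)) →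
      infNorm τ Rmul (Lsxi ξ) = (infNorm τ Rmul ξ) ^ 2) ∧
    -- … and is complete on L^∞(τ)
    (∀ f : ℕ → H, (∀ n, MemLinfty τ Rmul (f n)) →
      (∀ ε : ℝ, 0 < ε → ∃ N : ℕ, ∀ m n : ℕ, N ≤ m → N ≤ n →
        infNorm τ Rmul (f m - f n) < ε) →
      ∃ ξ : H, MemLinfty τ Rmul ξ ∧
        ∀ ε : ℝ, 0 < ε → ∃ N : ℕ, ∀ n : ℕ, N ≤ n → infNorm τ Rmul (f n - ξ) < ε) := by
  have hJcont : Continuous J :=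
    (AddMonoidHomClass.isometry_of_norm (AddMonoidHom.mk' J hJadd) hJiso).continuous
  refine ⟨fun _ _ _ _ c d η ζ => by rw [map_add, map_smul, map_smul], ?_, ?_,
    fun _ _ _ _ _ _ hLξ hLη' =>
      J_apply_eq_apply_J hdense hRmul hinner hτtr hJcont hJinv hJstar hLξ hLη', ⟨?_, ?_, ?_⟩,
    fun _ _ hξ hη => hξ.add_and_infNorm_add_le hdense hRmul hinner hτone hη,
    fun c _ hξ => ⟨(hξ.smul_and_infNorm_smul_le hdense hRmul hinner hτone c).1,
      hξ.infNorm_smul hdense hRmul hinner hτone c⟩,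
    fun _ hξ => ⟨hξ.infNorm_nonneg hdense hRmul hinner hτone,
      fun h => norm_le_zero_iff.mp (h ▸ hξ.norm_le_infNorm hdense hRmul hinner hτone)⟩,
    fun _ _ _ hη _ hL => memLinfty_apply_and_infNorm_apply_le hdense hRmul hinner hτone hη hL,
    fun _ _ _ hL => infNorm_apply_self_eq_sq hdense hRmul hinner hτone hτtr hJcont hJstar hL,
    fun _ hf hcau => exists_memLinfty_tendsto_infNorm hdense hRmul hinner hτone hf hcau⟩
  · intro ξ η _ _ Lξ Lη Lc hLξ hLη c d hLc ζ
    refine hdense.induction_on ζ (isClosed_eq (by fun_prop) (by fun_prop)) fun a => ?_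
    rw [hLc, map_add, map_smul, map_smul, hLξ, hLη]
  · intro ξ η ζ _ _ _ Lξ Lη Lp hLξ hLη hLp
    refine hdense.induction_on ζ (isClosed_eq (by fun_prop) (by fun_prop)) fun a => ?_
    rw [hLp, hLη, apply_Rmul_comm hdense hRmul hLξ]
  · refine (memLinfty_and_infNorm_le_opNorm hdense hRmul hinner hτone
      (L := ContinuousLinearMap.id ℂ H) fun a => ?_).1
    rw [hRmul, one_mul, ContinuousLinearMap.id_apply]
  · intro L hL ξ
    refine hdense.induction_on ξ (isClosed_eq (by fun_prop) (by fun_prop)) fun a => ?_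
    rw [hL, hRmul, one_mul]
  · intro ξ _ L hL
    rw [hL, Rmul_one_apply hdense hRmul]

/-- Equipped with the product `ξη := L_ξ(η)` (where `L_ζ`, for `ζ ∈ L^∞(τ)`, is
the bounded operator determined by `L_ζ(ι a) = ζ·a = Rmul a ζ`), the involution `ξ ↦ ξ* = J ξ`,
the unit `ι 1`, and the norm `‖·‖_∞`, the space `L^∞(τ)` is a unital C*-algebra: the product is
associative and bilinear, `(ξη)* = η*ξ*`, the norm `‖·‖_∞` is a complete and submultiplicative
norm, and the C*-identity `‖ξ*ξ‖_∞ = ‖ξ‖_∞²` holds. -/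
theorem statement5
    {A H : Type*} [NormedRing A] [StarRing A] [CStarRing A] [NormedAlgebra ℂ A]
    [StarModule ℂ A] [CompleteSpace A]
    [NormedAddCommGroup H] [InnerProductSpace ℂ H] [CompleteSpace H]
    (τ : A →ₗ[ℂ] ℂ)
    (hτpos : ∀ a : A, 0 ≤ (τ (star a * a)).re ∧ (τ (star a * a)).im = 0)
    (hτone : τ 1 = 1)
    (hτtr : ∀ a b : A, τ (a * b) = τ (b * a))
    (ι : A →ₗ[ℂ] H) (hdense : DenseRange ι)
    (hinner : ∀ a b : A, (inner ℂ (ι a) (ι b) : ℂ) = τ (star a * b))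
    (Lmul Rmul : A → H →L[ℂ] H)
    (hLmul : ∀ a b : A, Lmul a (ι b) = ι (a * b))
    (hRmul : ∀ a b : A, Rmul a (ι b) = ι (b * a))
    (J : H → H)
    (hJadd : ∀ ξ η : H, J (ξ + η) = J ξ + J η)
    (hJsmul : ∀ (c : ℂ) (ξ : H), J (c • ξ) = star c • J ξ)
    (hJiso : ∀ ξ : H, ‖J ξ‖ = ‖ξ‖)
    (hJinv : ∀ ξ : H, J (J ξ) = ξ)
    (hJstar : ∀ a : A, J (ι a) = ι (star a)) :
    -- the product is bilinear: linear in the right variable …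
    (∀ ξ : H, MemLinfty τ Rmul ξ → ∀ Lxi : H →L[ℂ] H, (∀ a : A, Lxi (ι a) = Rmul a ξ) →
      ∀ (c d : ℂ) (η ζ : H), Lxi (c • η + d • ζ) = c • Lxi η + d • Lxi ζ) ∧
    -- … and linear in the left variable
    (∀ ξ η : H, MemLinfty τ Rmul ξ → MemLinfty τ Rmul η →
      ∀ Lxi Leta Lcomb : H →L[ℂ] H,
        (∀ a : A, Lxi (ι a) = Rmul a ξ) → (∀ a : A, Leta (ι a) = Rmul a η) →
        ∀ c d : ℂ, (∀ a : A, Lcomb (ι a) = Rmul a (c • ξ + d • η)) →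
        ∀ ζ : H, Lcomb ζ = c • Lxi ζ + d • Leta ζ) ∧
    -- the product is associative: (ξη)ζ = ξ(ηζ)
    (∀ ξ η ζ : H, MemLinfty τ Rmul ξ → MemLinfty τ Rmul η → MemLinfty τ Rmul ζ →
      ∀ Lxi Leta Lprod : H →L[ℂ] H,
        (∀ a : A, Lxi (ι a) = Rmul a ξ) → (∀ a : A, Leta (ι a) = Rmul a η) →
        (∀ a : A, Lprod (ι a) = Rmul a (Lxi η)) →
        Lprod ζ = Lxi (Leta ζ)) ∧
    -- the involution is an anti-homomorphism: (ξη)* = η*ξ*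
    (∀ ξ η : H, MemLinfty τ Rmul ξ → MemLinfty τ Rmul η →
      ∀ Lxi Lseta : H →L[ℂ] H,
        (∀ a : A, Lxi (ι a) = Rmul a ξ) → (∀ a : A, Lseta (ι a) = Rmul a (J η)) →
        J (Lxi η) = Lseta (J ξ)) ∧
    -- the image of 1 ∈ A is a unit
    (MemLinfty τ Rmul (ι 1) ∧
      (∀ Lone : H →L[ℂ] H, (∀ a : A, Lone (ι a) = Rmul a (ι 1)) → ∀ ξ : H, Lone ξ = ξ) ∧
      (∀ ξ : H, MemLinfty τ Rmul ξ → ∀ Lxi : H →L[ℂ] H,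
        (∀ a : A, Lxi (ι a) = Rmul a ξ) → Lxi (ι 1) = ξ)) ∧
    -- ‖·‖_∞ is a norm on L^∞(τ) …
    (∀ ξ η : H, MemLinfty τ Rmul ξ → MemLinfty τ Rmul η →
      MemLinfty τ Rmul (ξ + η) ∧
      infNorm τ Rmul (ξ + η) ≤ infNorm τ Rmul ξ + infNorm τ Rmul η) ∧
    (∀ (c : ℂ) (ξ : H), MemLinfty τ Rmul ξ →
      MemLinfty τ Rmul (c • ξ) ∧ infNorm τ Rmul (c • ξ) = ‖c‖ * infNorm τ Rmul ξ) ∧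
    (∀ ξ : H, MemLinfty τ Rmul ξ → 0 ≤ infNorm τ Rmul ξ ∧ (infNorm τ Rmul ξ = 0 → ξ = 0)) ∧
    -- … which is submultiplicative …
    (∀ ξ η : H, MemLinfty τ Rmul ξ → MemLinfty τ Rmul η →
      ∀ Lxi : H →L[ℂ] H, (∀ a : A, Lxi (ι a) = Rmul a ξ) →
      MemLinfty τ Rmul (Lxi η) ∧
      infNorm τ Rmul (Lxi η) ≤ infNorm τ Rmul ξ * infNorm τ Rmul η) ∧
    -- … satisfies the C*-identity ‖ξ*ξ‖_∞ = ‖ξ‖_∞² …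
    (∀ ξ : H, MemLinfty τ Rmul ξ →
      ∀ Lsxi : H →L[ℂ] H, (∀ a : A, Lsxi (ι a) = Rmul a (J ξ)) →
      infNorm τ Rmul (Lsxi ξ) = (infNorm τ Rmul ξ) ^ 2) ∧
    -- … and is complete on L^∞(τ)
    (∀ f : ℕ → H, (∀ n, MemLinfty τ Rmul (f n)) →
      (∀ ε : ℝ, 0 < ε → ∃ N : ℕ, ∀ m n : ℕ, N ≤ m → N ≤ n →
        infNorm τ Rmul (f m - f n) < ε) →
      ∃ ξ : H, MemLinfty τ Rmul ξ ∧
        ∀ ε : ℝ, 0 < ε → ∃ N : ℕ, ∀ n : ℕ, N ≤ n → infNorm τ Rmul (f n - ξ) < ε) :=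
  statement5_general τ hτone hτtr ι hdense hinner Rmul hRmul J hJadd hJiso hJinv hJstar
end

section
/- The map ξ ↦ L_ξ is an injective unital *-homomorphism from L^∞(τ) into the bounded operators B(L²(τ)), i.e. L_{ξη} = L_ξ∘L_η and L_{ξ*} = (L_ξ)* for all ξ, η ∈ L^∞(τ), it is isometric: ‖L_ξ‖_{B(L²(τ))} = ‖ξ‖_∞, and for every a ∈ A and every ξ ∈ L²(τ) one has L_a(ξ) = a·ξ. -/
open scoped InnerProductSpace

/-! Every `L_ξ` is pinned down by its values on the dense subspace `A ⊆ L²(τ)`, where it is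
`a ↦ ξ·a`.  Hence `L_ξ` commutes with all right multiplications, which gives multiplicativity
and `L_ξ(1) = ξ`.  The trace property makes right multiplication by `a*` adjoint to right
multiplication by `a` and makes `J` antiunitary; together they identify `L_{ξ*}` with
`(L_ξ)*`.  The isometry holds because an operator norm may be computed on a dense subset
of the unit ball. -/

section DenseRange

variable {𝕜 E F : Type*} [RCLike 𝕜] [NormedAddCommGroup E] [NormedAddCommGroup F]

theorem ContinuousLinearMap.ext_of_denseRange [NormedSpace 𝕜 E] [NormedSpace 𝕜 F] {α : Type*}
    {ι : α → E} (hι : DenseRange ι) {S T : E →L[𝕜] F} (h : ∀ a, S (ι a) = T (ι a)) : S = T :=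
  ContinuousLinearMap.coeFn_injective (hι.equalizer S.continuous T.continuous (funext h))

theorem ContinuousLinearMap.opNorm_le_of_denseRange [NormedSpace 𝕜 E] [NormedSpace 𝕜 F]
    {A : Type*} [AddCommGroup A] [Module 𝕜 A] {ι : A →ₗ[𝕜] E} (hι : DenseRange ι)
    (T : E →L[𝕜] F) {M : ℝ} (hM : 0 ≤ M) (h : ∀ a, ‖ι a‖ ≤ 1 → ‖T (ι a)‖ ≤ M) : ‖T‖ ≤ M := by
  have hrange : ∀ a, ‖T (ι a)‖ ≤ M * ‖ι a‖ := by
    intro a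
    rcases (norm_nonneg (ι a)).eq_or_lt with h0 | h0
    · rw [← h0, norm_eq_zero.mp h0.symm, map_zero, norm_zero, mul_zero]
    · have hunit : ‖ι ((‖ι a‖⁻¹ : 𝕜) • a)‖ ≤ 1 := by
        rw [map_smul, norm_smul, norm_inv, RCLike.norm_ofReal, abs_norm, inv_mul_cancel₀ h0.ne']
      have := h _ hunit
      rwa [map_smul, map_smul, norm_smul, norm_inv, RCLike.norm_ofReal, abs_norm,
        inv_mul_le_iff₀ h0, mul_comm] at this
  exact T.opNorm_le_bound hM fun x =>
    hι.induction_on x (isClosed_le (by fun_prop) (by fun_prop)) hrange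

theorem ContinuousLinearMap.opNorm_eq_sSup_of_denseRange [NormedSpace 𝕜 E] [NormedSpace 𝕜 F]
    {A : Type*} [AddCommGroup A] [Module 𝕜 A] {ι : A →ₗ[𝕜] E} (hι : DenseRange ι)
    (T : E →L[𝕜] F) : ‖T‖ = sSup {r | ∃ a, ‖ι a‖ ≤ 1 ∧ r = ‖T (ι a)‖} := by
  set S := {r | ∃ a, ‖ι a‖ ≤ 1 ∧ r = ‖T (ι a)‖}
  have hS : ∀ r ∈ S, r ≤ ‖T‖ := by
    rintro _ ⟨a, ha, rfl⟩
    simpa using T.le_of_opNorm_le_of_le le_rfl ha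
  have h0 : (0 : ℝ) ∈ S := ⟨0, by simp, by simp⟩
  exact le_antisymm
    (T.opNorm_le_of_denseRange hι (le_csSup ⟨_, hS⟩ h0) fun a ha => le_csSup ⟨_, hS⟩ ⟨a, ha, rfl⟩)
    (csSup_le ⟨0, h0⟩ hS)

theorem ContinuousLinearMap.eq_adjoint_of_denseRange [InnerProductSpace 𝕜 E]
    [InnerProductSpace 𝕜 F] [CompleteSpace E] [CompleteSpace F] {α β : Type*}
    {ιE : α → E} {ιF : β → F} (hιE : DenseRange ιE) (hιF : DenseRange ιF)
    {S : E →L[𝕜] F} {T : F →L[𝕜] E} (h : ∀ a b, ⟪S (ιE a), ιF b⟫_𝕜 = ⟪ιE a, T (ιF b)⟫_𝕜) :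
    S = ContinuousLinearMap.adjoint T := by
  refine (S.eq_adjoint_iff T).2 fun x y => ?_
  refine hιE.induction_on x (isClosed_eq (by fun_prop) (by fun_prop)) fun a => ?_
  exact hιF.induction_on y (isClosed_eq (by fun_prop) (by fun_prop)) (h a)

end DenseRange

section RightMul

variable {𝕜 A H : Type*} [RCLike 𝕜] [Monoid A]
  [NormedAddCommGroup H] [InnerProductSpace 𝕜 H]
  {τ : A → 𝕜} {ι : A → H} {Rmul : A → H →L[𝕜] H}

theorem rightMul_one (hι : DenseRange ι) (hR : ∀ a b, Rmul a (ι b) = ι (b * a)) :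
    Rmul 1 = ContinuousLinearMap.id 𝕜 H :=
  ContinuousLinearMap.ext_of_denseRange hι fun b => by simp [hR]

theorem rightMul_mul_apply (hι : DenseRange ι) (hR : ∀ a b, Rmul a (ι b) = ι (b * a))
    (a b : A) (v : H) : Rmul (a * b) v = Rmul b (Rmul a v) := by
  have : Rmul (a * b) = (Rmul b).comp (Rmul a) :=
    ContinuousLinearMap.ext_of_denseRange hι fun c => by simp [hR, mul_assoc]
  rw [this, ContinuousLinearMap.comp_apply]

theorem rightMul_apply_commute (hι : DenseRange ι) (hR : ∀ a b, Rmul a (ι b) = ι (b * a))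
    {ξ : H} {L : H →L[𝕜] H} (hL : ∀ a, L (ι a) = Rmul a ξ) (a : A) (v : H) :
    Rmul a (L v) = L (Rmul a v) := by
  have : (Rmul a).comp L = L.comp (Rmul a) :=
    ContinuousLinearMap.ext_of_denseRange hι fun b => by
      simp only [ContinuousLinearMap.comp_apply, hL, hR, rightMul_mul_apply hι hR]
  exact congr($this v)

theorem inner_rightMul_left [StarMul A] (hι : DenseRange ι) (hR : ∀ a b, Rmul a (ι b) = ι (b * a))
    (hinner : ∀ a b, ⟪ι a, ι b⟫_𝕜 = τ (star a * b)) (htr : ∀ a b, τ (a * b) = τ (b * a))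
    (a : A) (u v : H) : ⟪Rmul a u, v⟫_𝕜 = ⟪u, Rmul (star a) v⟫_𝕜 := by
  refine hι.induction_on₂ (p := fun u v => ⟪Rmul a u, v⟫_𝕜 = ⟪u, Rmul (star a) v⟫_𝕜)
    (isClosed_eq (by fun_prop) (by fun_prop)) (fun c d => ?_) u v
  rw [hR, hR, hinner, hinner, star_mul, mul_assoc, htr, mul_assoc]

theorem inner_conj_conj [StarMul A] (hι : DenseRange ι) (hinner : ∀ a b, ⟪ι a, ι b⟫_𝕜 = τ (star a * b))
    (htr : ∀ a b, τ (a * b) = τ (b * a)) {J : H → H} (hJ : Continuous J)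
    (hJstar : ∀ a, J (ι a) = ι (star a)) (u v : H) : ⟪J u, J v⟫_𝕜 = ⟪v, u⟫_𝕜 := by
  refine hι.induction_on₂ (p := fun u v => ⟪J u, J v⟫_𝕜 = ⟪v, u⟫_𝕜)
    (isClosed_eq (by fun_prop) (by fun_prop)) (fun a b => ?_) u v
  rw [hJstar, hJstar, hinner, hinner, star_star, htr]

theorem conj_rightMul_eq_adjoint [StarMul A] [CompleteSpace H] (hι : DenseRange ι)
    (hR : ∀ a b, Rmul a (ι b) = ι (b * a)) (hinner : ∀ a b, ⟪ι a, ι b⟫_𝕜 = τ (star a * b))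
    (htr : ∀ a b, τ (a * b) = τ (b * a)) {J : H → H} (hJ : Continuous J)
    (hJstar : ∀ a, J (ι a) = ι (star a)) {ξ : H} {L L' : H →L[𝕜] H}
    (hL : ∀ a, L (ι a) = Rmul a ξ) (hL' : ∀ a, L' (ι a) = Rmul a (J ξ)) :
    L' = ContinuousLinearMap.adjoint L := by
  refine ContinuousLinearMap.eq_adjoint_of_denseRange hι hι fun a b => ?_
  have hJ_ab : J (ι (a * star b)) = ι (b * star a) := by rw [hJstar, star_mul, star_star]
  calc ⟪L' (ι a), ι b⟫_𝕜 = ⟪J ξ, ι (b * star a)⟫_𝕜 := by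
        rw [hL', inner_rightMul_left hι hR hinner htr, hR]
    _ = ⟪ι (a * star b), ξ⟫_𝕜 := by rw [← hJ_ab, inner_conj_conj hι hinner htr hJ hJstar]
    _ = ⟪ι a, L (ι b)⟫_𝕜 := by
        rw [← hR, inner_rightMul_left hι hR hinner htr, star_star, hL]

end RightMul

theorem infNormSet_eq {A H : Type*} [NormedRing A] [StarRing A] [NormedAlgebra ℂ A]
    [NormedAddCommGroup H] [InnerProductSpace ℂ H] {τ : A →ₗ[ℂ] ℂ} {ι : A → H}
    (hinner : ∀ a b, ⟪ι a, ι b⟫_ℂ = τ (star a * b)) {Rmul : A → H →L[ℂ] H} {ξ : H}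
    {L : H →L[ℂ] H} (hL : ∀ a, L (ι a) = Rmul a ξ) :
    infNormSet τ Rmul ξ = {r | ∃ a, ‖ι a‖ ≤ 1 ∧ r = ‖L (ι a)‖} := by
  have hnorm : ∀ a, ‖ι a‖ ^ 2 = (τ (star a * a)).re := fun a => by
    rw [← @inner_self_eq_norm_sq ℂ, hinner]; rfl
  simp only [infNormSet, hL, ← hnorm, sq_le_one_iff₀ (norm_nonneg _)]

theorem statement6_general
    {A H : Type*} [NormedRing A] [StarRing A] [NormedAlgebra ℂ A]
    [NormedAddCommGroup H] [InnerProductSpace ℂ H] [CompleteSpace H]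
    (τ : A →ₗ[ℂ] ℂ)
    (hτtr : ∀ a b : A, τ (a * b) = τ (b * a))
    (ι : A →ₗ[ℂ] H) (hdense : DenseRange ι)
    (hinner : ∀ a b : A, (inner ℂ (ι a) (ι b) : ℂ) = τ (star a * b))
    (Lmul Rmul : A → H →L[ℂ] H)
    (hLmul : ∀ a b : A, Lmul a (ι b) = ι (a * b))
    (hRmul : ∀ a b : A, Rmul a (ι b) = ι (b * a))
    (J : H → H)
    (hJadd : ∀ ξ η : H, J (ξ + η) = J ξ + J η)
    (hJiso : ∀ ξ : H, ‖J ξ‖ = ‖ξ‖)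
    (hJstar : ∀ a : A, J (ι a) = ι (star a)) :
    -- multiplicativity: L_{ξη} = L_ξ ∘ L_η
    (∀ ξ η : H, MemLinfty τ Rmul ξ → MemLinfty τ Rmul η →
      ∀ Lxi Leta Lprod : H →L[ℂ] H,
        (∀ a : A, Lxi (ι a) = Rmul a ξ) → (∀ a : A, Leta (ι a) = Rmul a η) →
        (∀ a : A, Lprod (ι a) = Rmul a (Lxi η)) →
        Lprod = Lxi.comp Leta) ∧
    -- *-preservation: L_{ξ*} = (L_ξ)*
    (∀ ξ : H, MemLinfty τ Rmul ξ →
      ∀ Lxi Lsxi : H →L[ℂ] H,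
        (∀ a : A, Lxi (ι a) = Rmul a ξ) → (∀ a : A, Lsxi (ι a) = Rmul a (J ξ)) →
        Lsxi = ContinuousLinearMap.adjoint Lxi) ∧
    -- injectivity
    (∀ ξ η : H, MemLinfty τ Rmul ξ → MemLinfty τ Rmul η →
      ∀ Lxi Leta : H →L[ℂ] H,
        (∀ a : A, Lxi (ι a) = Rmul a ξ) → (∀ a : A, Leta (ι a) = Rmul a η) →
        Lxi = Leta → ξ = η) ∧
    -- unitality: L_1 = id
    (∀ Lone : H →L[ℂ] H, (∀ a : A, Lone (ι a) = Rmul a (ι 1)) →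
      Lone = ContinuousLinearMap.id ℂ H) ∧
    -- isometry: ‖L_ξ‖ = ‖ξ‖_∞
    (∀ ξ : H, MemLinfty τ Rmul ξ →
      ∀ Lxi : H →L[ℂ] H, (∀ a : A, Lxi (ι a) = Rmul a ξ) →
        ‖Lxi‖ = infNorm τ Rmul ξ) ∧
    -- for a ∈ A, the operator L_{ι a} is the left multiplication: L_a(ξ) = a·ξ
    (∀ a : A, ∀ La : H →L[ℂ] H, (∀ b : A, La (ι b) = Rmul b (ι a)) →
      ∀ ξ : H, La ξ = Lmul a ξ) := by
  have hJ : Continuous J :=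
    (AddMonoidHomClass.isometry_of_norm (AddMonoidHom.mk' J hJadd) hJiso).continuous
  have hR1 : ∀ ξ, Rmul 1 ξ = ξ := fun ξ => by rw [rightMul_one hdense hRmul]; rfl
  refine ⟨?_, ?_, ?_, ?_, ?_, ?_⟩
  · intro ξ η _ _ Lxi Leta Lprod hLxi hLeta hLprod
    refine ContinuousLinearMap.ext_of_denseRange hdense fun a => ?_
    rw [hLprod, rightMul_apply_commute hdense hRmul hLxi, ← hLeta]
    rfl
  · intro ξ _ Lxi Lsxi hLxi hLsxi
    exact conj_rightMul_eq_adjoint hdense hRmul hinner hτtr hJ hJstar hLxi hLsxi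
  · intro ξ η _ _ Lxi Leta hLxi hLeta heq
    rw [← hR1 ξ, ← hR1 η, ← hLxi, ← hLeta, heq]
  · intro Lone hLone
    exact ContinuousLinearMap.ext_of_denseRange hdense fun a => by simp [hLone, hRmul]
  · intro ξ _ Lxi hLxi
    rw [infNorm, infNormSet_eq hinner hLxi, Lxi.opNorm_eq_sSup_of_denseRange hdense]
  · intro a La hLa ξ
    have hLa_eq : La = Lmul a :=
      ContinuousLinearMap.ext_of_denseRange hdense fun b => by rw [hLa, hRmul, hLmul]
    rw [hLa_eq]

/-- The map `ξ ↦ L_ξ` (where `L_ξ` is the bounded operator determined by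
`L_ξ(ι a) = ξ·a = Rmul a ξ` for `ξ ∈ L^∞(τ)`) is an injective unital *-homomorphism from
`L^∞(τ)` into `B(L²(τ))`: `L_{ξη} = L_ξ ∘ L_η` and `L_{ξ*} = (L_ξ)*`; it is isometric,
`‖L_ξ‖ = ‖ξ‖_∞`; and for every `a ∈ A` and `ξ ∈ L²(τ)` one has `L_a(ξ) = a·ξ = Lmul a ξ`. -/
theorem statement6
    {A H : Type*} [NormedRing A] [StarRing A] [CStarRing A] [NormedAlgebra ℂ A]
    [StarModule ℂ A] [CompleteSpace A]
    [NormedAddCommGroup H] [InnerProductSpace ℂ H] [CompleteSpace H]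
    (τ : A →ₗ[ℂ] ℂ)
    (hτpos : ∀ a : A, 0 ≤ (τ (star a * a)).re ∧ (τ (star a * a)).im = 0)
    (hτone : τ 1 = 1)
    (hτtr : ∀ a b : A, τ (a * b) = τ (b * a))
    (ι : A →ₗ[ℂ] H) (hdense : DenseRange ι)
    (hinner : ∀ a b : A, (inner ℂ (ι a) (ι b) : ℂ) = τ (star a * b))
    (Lmul Rmul : A → H →L[ℂ] H)
    (hLmul : ∀ a b : A, Lmul a (ι b) = ι (a * b))
    (hRmul : ∀ a b : A, Rmul a (ι b) = ι (b * a))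
    (J : H → H)
    (hJadd : ∀ ξ η : H, J (ξ + η) = J ξ + J η)
    (hJsmul : ∀ (c : ℂ) (ξ : H), J (c • ξ) = star c • J ξ)
    (hJiso : ∀ ξ : H, ‖J ξ‖ = ‖ξ‖)
    (hJinv : ∀ ξ : H, J (J ξ) = ξ)
    (hJstar : ∀ a : A, J (ι a) = ι (star a)) :
    -- multiplicativity: L_{ξη} = L_ξ ∘ L_η
    (∀ ξ η : H, MemLinfty τ Rmul ξ → MemLinfty τ Rmul η →
      ∀ Lxi Leta Lprod : H →L[ℂ] H,
        (∀ a : A, Lxi (ι a) = Rmul a ξ) → (∀ a : A, Leta (ι a) = Rmul a η) →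
        (∀ a : A, Lprod (ι a) = Rmul a (Lxi η)) →
        Lprod = Lxi.comp Leta) ∧
    -- *-preservation: L_{ξ*} = (L_ξ)*
    (∀ ξ : H, MemLinfty τ Rmul ξ →
      ∀ Lxi Lsxi : H →L[ℂ] H,
        (∀ a : A, Lxi (ι a) = Rmul a ξ) → (∀ a : A, Lsxi (ι a) = Rmul a (J ξ)) →
        Lsxi = ContinuousLinearMap.adjoint Lxi) ∧
    -- injectivity
    (∀ ξ η : H, MemLinfty τ Rmul ξ → MemLinfty τ Rmul η →
      ∀ Lxi Leta : H →L[ℂ] H,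
        (∀ a : A, Lxi (ι a) = Rmul a ξ) → (∀ a : A, Leta (ι a) = Rmul a η) →
        Lxi = Leta → ξ = η) ∧
    -- unitality: L_1 = id
    (∀ Lone : H →L[ℂ] H, (∀ a : A, Lone (ι a) = Rmul a (ι 1)) →
      Lone = ContinuousLinearMap.id ℂ H) ∧
    -- isometry: ‖L_ξ‖ = ‖ξ‖_∞
    (∀ ξ : H, MemLinfty τ Rmul ξ →
      ∀ Lxi : H →L[ℂ] H, (∀ a : A, Lxi (ι a) = Rmul a ξ) →
        ‖Lxi‖ = infNorm τ Rmul ξ) ∧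
    -- for a ∈ A, the operator L_{ι a} is the left multiplication: L_a(ξ) = a·ξ
    (∀ a : A, ∀ La : H →L[ℂ] H, (∀ b : A, La (ι b) = Rmul b (ι a)) →
      ∀ ξ : H, La ξ = Lmul a ξ) :=
  statement6_general τ hτtr ι hdense hinner Lmul Rmul hLmul hRmul J hJadd hJiso hJstar
end

section
/- As subsets of L²(τ), one has L^∞(τ_B) = L²(τ_B) ∩ L^∞(τ). In particular (the nontrivial inclusion), every ξ ∈ L²(τ_B) with sup{‖ξ·b‖_{L²(τ)} : b ∈ B, τ(b*b) ≤ 1} < ∞ also satisfies sup{‖ξ·a‖_{L²(τ)} : a ∈ A, τ(a*a) ≤ 1} < ∞. -/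
/-!
Normalise so that `‖ξ·b‖ ≤ ‖b‖₂` for `b ∈ B`. For such `ξ`, the vector `ζ = ξ*ξ`, the limit of
`b_n*·ξ` for `b_n ∈ B` tending to `ξ`, lies in `L²(τ_B)`, satisfies the same bound, has
`‖ζ‖ ≤ ‖ξ‖`, and `‖ξ·a‖² = ⟨a, ζ·a⟩ ≤ ‖a‖₂ ‖ζ·a‖` for every `a ∈ A`. So, for a fixed `a` with
`‖a‖₂ ≤ 1`, the supremum `s` of `‖η·a‖` over all such `η` with `‖η‖ ≤ ‖ξ‖` (finite, as `η ↦ η·a`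
is bounded) satisfies `s² ≤ s`, whence `s ≤ 1`.
-/

open scoped InnerProductSpace

/-- The set of numbers `‖ξ·b‖` over `L²`-contractions `b ∈ B`, for a unital *-subalgebra
`B ⊆ A`; its supremum is the `L^∞(τ_B)`-norm of `ξ`. -/
def infNormSetB {A H : Type*} [NormedRing A] [StarRing A] [NormedAlgebra ℂ A] [StarModule ℂ A]
    [NormedAddCommGroup H] [InnerProductSpace ℂ H]
    (τ : A →ₗ[ℂ] ℂ) (Rmul : A → H →L[ℂ] H) (B : StarSubalgebra ℂ A) (ξ : H) : Set ℝ :=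
  {r : ℝ | ∃ b : A, b ∈ B ∧ (τ (star b * b)).re ≤ 1 ∧ r = ‖Rmul b ξ‖}

/-- Boundedness part of `ξ ∈ L^∞(τ_B)`. -/
def MemLinftyB {A H : Type*} [NormedRing A] [StarRing A] [NormedAlgebra ℂ A] [StarModule ℂ A]
    [NormedAddCommGroup H] [InnerProductSpace ℂ H]
    (τ : A →ₗ[ℂ] ℂ) (Rmul : A → H →L[ℂ] H) (B : StarSubalgebra ℂ A) (ξ : H) : Prop :=
  BddAbove (infNormSetB τ Rmul B ξ)

open Filter Topology

theorem le_one_of_forall_exists_sq_le {X : Type*} {C : Set X} {φ : X → ℝ}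
    (hbdd : BddAbove (φ '' C)) (hsq : ∀ x ∈ C, ∃ y ∈ C, φ x ^ 2 ≤ φ y) :
    ∀ x ∈ C, φ x ≤ 1 := by
  intro x hx
  set s := sSup (φ '' C)
  have hle : ∀ y ∈ C, φ y ^ 2 ≤ s := fun y hy =>
    let ⟨z, hz, hyz⟩ := hsq y hy
    hyz.trans (le_csSup hbdd (Set.mem_image_of_mem φ hz))
  have hs : s ≤ √s := csSup_le ⟨φ x, Set.mem_image_of_mem φ hx⟩ (by
    rintro _ ⟨y, hy, rfl⟩
    exact (le_abs_self _).trans (Real.abs_le_sqrt (hle y hy)))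
  have hs0 : 0 ≤ s := (sq_nonneg _).trans (hle x hx)
  have hs1 : s ≤ 1 := by nlinarith [Real.sq_sqrt hs0, Real.sqrt_nonneg s]
  nlinarith [hle x hx]

theorem norm_le_mul_norm_of_norm_le_one {𝕜 E F G : Type*} [RCLike 𝕜] [AddCommGroup E]
    [Module 𝕜 E] [SeminormedAddCommGroup F] [NormedSpace 𝕜 F] [SeminormedAddCommGroup G]
    [NormedSpace 𝕜 G] {S : Submodule 𝕜 E} {f : E →ₗ[𝕜] F} {g : E →ₗ[𝕜] G} {M : ℝ}
    (h : ∀ x ∈ S, ‖g x‖ ≤ 1 → ‖f x‖ ≤ M) {x : E} (hx : x ∈ S) : ‖f x‖ ≤ M * ‖g x‖ := by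
  have hscale : ∀ t : ℝ, 0 < t → t * ‖g x‖ ≤ 1 → t * ‖f x‖ ≤ M := fun t ht hgt => by
    have htx := h _ (S.smul_mem (t : 𝕜) hx) (by simpa [norm_smul, abs_of_pos ht] using hgt)
    simpa [norm_smul, abs_of_pos ht] using htx
  rcases (norm_nonneg (g x)).eq_or_lt with hg | hg
  · -- all multiples of `x` are admissible, so `f x = 0`
    rw [← hg, mul_zero]
    by_contra! hf
    have := hscale ((|M| + 1) / ‖f x‖) (div_pos (by positivity) hf) (by simp [← hg])
    rw [div_mul_cancel₀ _ hf.ne'] at this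
    linarith [le_abs_self M]
  · have := hscale ‖g x‖⁻¹ (inv_pos.2 hg) (inv_mul_cancel₀ hg.ne').le
    rwa [inv_mul_le_iff₀ hg, mul_comm] at this

theorem norm_le_of_forall_norm_inner_le {𝕜 E : Type*} [RCLike 𝕜] [SeminormedAddCommGroup E]
    [InnerProductSpace 𝕜 E] {S : Set E} {v : E} (hv : v ∈ closure S) {C : ℝ} (hC : 0 ≤ C)
    (hS : ∀ s ∈ S, ‖⟪s, v⟫_𝕜‖ ≤ C * ‖s‖) : ‖v‖ ≤ C := by
  have hvv : ‖⟪v, v⟫_𝕜‖ ≤ C * ‖v‖ :=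
    closure_minimal (t := {s | ‖⟪s, v⟫_𝕜‖ ≤ C * ‖s‖}) hS
      (isClosed_le (by fun_prop) (by fun_prop)) hv
  have : ‖v‖ ^ 2 ≤ C * ‖v‖ := by
    rw [← inner_self_eq_norm_sq (𝕜 := 𝕜)]; exact (RCLike.re_le_norm _).trans hvv
  nlinarith [norm_nonneg v]

theorem exists_tendsto_of_dist_le {α X Y : Type*} [PseudoMetricSpace X] [PseudoMetricSpace Y]
    [CompleteSpace Y] {s : Set α} {g : α → X} {f : α → Y} {K : ℝ}
    (hfg : ∀ i ∈ s, ∀ j ∈ s, dist (f i) (f j) ≤ K * dist (g i) (g j)) {x : X}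
    (hx : x ∈ closure (g '' s)) :
    ∃ u : ℕ → α, (∀ n, u n ∈ s) ∧ Tendsto (g ∘ u) atTop (𝓝 x) ∧
      ∃ y, Tendsto (f ∘ u) atTop (𝓝 y) := by
  obtain ⟨v, hv, hvx⟩ := mem_closure_iff_seq_limit.mp hx
  choose u hu hgu using hv
  have hgv : g ∘ u = v := funext hgu
  refine ⟨u, hu, hgv ▸ hvx, cauchySeq_tendsto_of_complete ?_⟩
  rw [Metric.cauchySeq_iff]
  intro ε hε
  obtain ⟨N, hN⟩ := Metric.cauchySeq_iff.mp hvx.cauchySeq (ε / (|K| + 1)) (by positivity)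
  refine ⟨N, fun m hm n hn => (hfg _ (hu m) _ (hu n)).trans_lt ?_⟩
  calc K * dist (g (u m)) (g (u n)) ≤ (|K| + 1) * dist (v m) (v n) := by
        rw [← hgv]
        exact mul_le_mul_of_nonneg_right (by linarith [le_abs_self K]) dist_nonneg
    _ < (|K| + 1) * (ε / (|K| + 1)) := by gcongr; exact hN m hm n hn
    _ = ε := by field_simp

/-- `H` plays the role of `L²(τ)`, `ι` of the canonical map `A → L²(τ)`, and `Lmul a`, `Rmul a`
of the extensions of left and right multiplication by `a`. -/
structure IsTracialGNS {A H : Type*} [Ring A] [StarRing A] [Algebra ℂ A]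
    [NormedAddCommGroup H] [InnerProductSpace ℂ H]
    (τ : A →ₗ[ℂ] ℂ) (ι : A →ₗ[ℂ] H) (Lmul Rmul : A → H →L[ℂ] H) : Prop where
  denseRange : DenseRange ι
  inner_apply : ∀ a b, ⟪ι a, ι b⟫_ℂ = τ (star a * b)
  trace_mul_comm : ∀ a b, τ (a * b) = τ (b * a)
  Lmul_apply : ∀ a b, Lmul a (ι b) = ι (a * b)
  Rmul_apply : ∀ a b, Rmul a (ι b) = ι (b * a)

namespace IsTracialGNS

variable {A H : Type*} [Ring A] [StarRing A] [Algebra ℂ A]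
  [NormedAddCommGroup H] [InnerProductSpace ℂ H]
  {τ : A →ₗ[ℂ] ℂ} {ι : A →ₗ[ℂ] H} {Lmul Rmul : A → H →L[ℂ] H}

theorem clm_ext (h : IsTracialGNS τ ι Lmul Rmul) {f g : H →L[ℂ] H}
    (hfg : ∀ a, f (ι a) = g (ι a)) : f = g :=
  DFunLike.coe_injective <|
    h.denseRange.equalizer f.continuous g.continuous (funext hfg)

theorem inner_ext (h : IsTracialGNS τ ι Lmul Rmul) {f g : H →L[ℂ] H}
    (hfg : ∀ a b, ⟪f (ι a), ι b⟫_ℂ = ⟪ι a, g (ι b)⟫_ℂ) (x y : H) :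
    ⟪f x, y⟫_ℂ = ⟪x, g y⟫_ℂ :=
  congrFun ((h.denseRange.prodMap h.denseRange).equalizer
    (show Continuous fun p : H × H => ⟪f p.1, p.2⟫_ℂ by fun_prop)
    (show Continuous fun p : H × H => ⟪p.1, g p.2⟫_ℂ by fun_prop)
    (funext fun p => hfg p.1 p.2)) (x, y)

theorem Lmul_sub (h : IsTracialGNS τ ι Lmul Rmul) (x y : A) :
    Lmul (x - y) = Lmul x - Lmul y :=
  h.clm_ext fun b => by simp [h.Lmul_apply, sub_mul]

theorem Rmul_mul (h : IsTracialGNS τ ι Lmul Rmul) (x y : A) :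
    Rmul (x * y) = (Rmul y).comp (Rmul x) :=
  h.clm_ext fun b => by simp [h.Rmul_apply, mul_assoc]

def Rmulₗ (h : IsTracialGNS τ ι Lmul Rmul) (ξ : H) : A →ₗ[ℂ] H where
  toFun a := Rmul a ξ
  map_add' x y :=
    DFunLike.congr_fun (h.clm_ext (f := Rmul (x + y)) (g := Rmul x + Rmul y) fun b => by
      simp [h.Rmul_apply, mul_add]) ξ
  map_smul' c x :=
    DFunLike.congr_fun (h.clm_ext (f := Rmul (c • x)) (g := c • Rmul x) fun b => by
      simp [h.Rmul_apply]) ξ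

theorem inner_Lmul_left (h : IsTracialGNS τ ι Lmul Rmul) (a : A) (x y : H) :
    ⟪Lmul a x, y⟫_ℂ = ⟪x, Lmul (star a) y⟫_ℂ :=
  h.inner_ext (fun b c => by
    rw [h.Lmul_apply, h.Lmul_apply, h.inner_apply, h.inner_apply, star_mul, mul_assoc]) x y

theorem inner_Rmul_left (h : IsTracialGNS τ ι Lmul Rmul) (a : A) (x y : H) :
    ⟪Rmul a x, y⟫_ℂ = ⟪x, Rmul (star a) y⟫_ℂ :=
  h.inner_ext (fun b c => by
    rw [h.Rmul_apply, h.Rmul_apply, h.inner_apply, h.inner_apply, star_mul, mul_assoc,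
      h.trace_mul_comm, mul_assoc]) x y

theorem inner_Lmul_star (h : IsTracialGNS τ ι Lmul Rmul) (b c : A) (v : H) :
    ⟪ι c, Lmul (star b) v⟫_ℂ = ⟪ι b, Rmul (star c) v⟫_ℂ := by
  rw [← h.inner_Lmul_left, h.Lmul_apply, ← h.Rmul_apply, h.inner_Rmul_left]

theorem norm_sq_apply (h : IsTracialGNS τ ι Lmul Rmul) (a : A) :
    ‖ι a‖ ^ 2 = (τ (star a * a)).re := by
  rw [← inner_self_eq_norm_sq (𝕜 := ℂ), h.inner_apply]; rfl

theorem norm_apply_le_one_iff (h : IsTracialGNS τ ι Lmul Rmul) (a : A) :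
    ‖ι a‖ ≤ 1 ↔ (τ (star a * a)).re ≤ 1 := by
  rw [← h.norm_sq_apply, sq_le_one_iff_abs_le_one, abs_norm]

theorem norm_apply_star (h : IsTracialGNS τ ι Lmul Rmul) (a : A) : ‖ι (star a)‖ = ‖ι a‖ := by
  rw [← sq_eq_sq₀ (norm_nonneg _) (norm_nonneg _), h.norm_sq_apply, h.norm_sq_apply, star_star,
    h.trace_mul_comm]

theorem sq_norm_Rmul_le (h : IsTracialGNS τ ι Lmul Rmul) {ξ ζ : H}
    (hζ : ∀ c, ⟪ι c, ζ⟫_ℂ = ⟪ξ, Rmul (star c) ξ⟫_ℂ) (a : A) :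
    ‖Rmul a ξ‖ ^ 2 ≤ ‖ι a‖ * ‖Rmul a ζ‖ := by
  have key : ⟪Rmul a ξ, Rmul a ξ⟫_ℂ = ⟪ι a, Rmul a ζ⟫_ℂ := calc
    ⟪Rmul a ξ, Rmul a ξ⟫_ℂ = ⟪ξ, Rmul (star (a * star a)) ξ⟫_ℂ := by
      rw [h.inner_Rmul_left, star_mul_star, h.Rmul_mul, ContinuousLinearMap.comp_apply]
    _ = ⟪Rmul (star a) (ι a), ζ⟫_ℂ := by rw [← hζ, h.Rmul_apply]
    _ = ⟪ι a, Rmul a ζ⟫_ℂ := by rw [h.inner_Rmul_left, star_star]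
  rw [← inner_self_eq_norm_sq (𝕜 := ℂ), key]
  exact (RCLike.re_le_norm _).trans (norm_inner_le_norm _ _)

section Subalgebra

variable [StarModule ℂ A] {B : StarSubalgebra ℂ A}

theorem Lmul_mem_closure (h : IsTracialGNS τ ι Lmul Rmul) {b : A} (hb : b ∈ B) {v : H}
    (hv : v ∈ closure (ι '' B)) : Lmul b v ∈ closure (ι '' B) :=
  map_mem_closure (Lmul b).continuous hv <| by
    rintro _ ⟨c, hc, rfl⟩
    exact ⟨b * c, mul_mem hb hc, (h.Lmul_apply b c).symm⟩

theorem Rmul_mem_closure (h : IsTracialGNS τ ι Lmul Rmul) {b : A} (hb : b ∈ B) {v : H}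
    (hv : v ∈ closure (ι '' B)) : Rmul b v ∈ closure (ι '' B) :=
  map_mem_closure (Rmul b).continuous hv <| by
    rintro _ ⟨c, hc, rfl⟩
    exact ⟨c * b, mul_mem hc hb, (h.Rmul_apply b c).symm⟩

variable {ξ : H} {M : ℝ}

theorem norm_Lmul_star_le (h : IsTracialGNS τ ι Lmul Rmul) (hξ : ξ ∈ closure (ι '' B))
    (hM : 0 ≤ M) (hξB : ∀ b ∈ B, ‖Rmul b ξ‖ ≤ M * ‖ι b‖) {b : A} (hb : b ∈ B) :
    ‖Lmul (star b) ξ‖ ≤ M * ‖ι b‖ := by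
  refine norm_le_of_forall_norm_inner_le (𝕜 := ℂ) (h.Lmul_mem_closure (star_mem hb) hξ)
    (by positivity) ?_
  rintro _ ⟨c, hc, rfl⟩
  calc ‖⟪ι c, Lmul (star b) ξ⟫_ℂ‖ = ‖⟪ι b, Rmul (star c) ξ⟫_ℂ‖ := by rw [h.inner_Lmul_star]
    _ ≤ ‖ι b‖ * ‖Rmul (star c) ξ‖ := norm_inner_le_norm _ _
    _ ≤ ‖ι b‖ * (M * ‖ι (star c)‖) := by gcongr; exact hξB _ (star_mem hc)
    _ = M * ‖ι b‖ * ‖ι c‖ := by rw [h.norm_apply_star]; ring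

/-- The vector `ξ* ξ`, obtained as the limit of `b_n* · ξ` for `b_n ∈ B` with `ι b_n → ξ`. -/
theorem exists_star_mul_self [CompleteSpace H] (h : IsTracialGNS τ ι Lmul Rmul)
    (hξ : ξ ∈ closure (ι '' B)) (hM : 0 ≤ M) (hξB : ∀ b ∈ B, ‖Rmul b ξ‖ ≤ M * ‖ι b‖) :
    ∃ ζ ∈ closure (ι '' B), ‖ζ‖ ≤ M * ‖ξ‖ ∧ ∀ c, ⟪ι c, ζ⟫_ℂ = ⟪ξ, Rmul (star c) ξ⟫_ℂ := by
  obtain ⟨u, hu, hιu, ζ, hζ⟩ := exists_tendsto_of_dist_le (s := B) (g := ι)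
    (f := fun b => Lmul (star b) ξ) (K := M) (fun i hi j hj => by
      rw [dist_eq_norm, dist_eq_norm, ← sub_apply, ← h.Lmul_sub, ← star_sub,
        ← map_sub]
      exact h.norm_Lmul_star_le hξ hM hξB (sub_mem hi hj)) hξ
  refine ⟨ζ, isClosed_closure.mem_of_tendsto hζ (Eventually.of_forall fun n =>
      h.Lmul_mem_closure (star_mem (hu n)) hξ),
    le_of_tendsto_of_tendsto' hζ.norm (hιu.norm.const_mul M) fun n =>
      h.norm_Lmul_star_le hξ hM hξB (hu n), fun c => ?_⟩
  refine tendsto_nhds_unique (tendsto_const_nhds.inner hζ) ?_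
  simpa only [Function.comp_apply, h.inner_Lmul_star] using hιu.inner tendsto_const_nhds

theorem norm_Rmul_le_of_inner_eq (h : IsTracialGNS τ ι Lmul Rmul) {ζ : H}
    (hζ : ζ ∈ closure (ι '' B)) (hM : 0 ≤ M) (hξB : ∀ b ∈ B, ‖Rmul b ξ‖ ≤ M * ‖ι b‖)
    (hζξ : ∀ c, ⟪ι c, ζ⟫_ℂ = ⟪ξ, Rmul (star c) ξ⟫_ℂ) {b : A} (hb : b ∈ B) :
    ‖Rmul b ζ‖ ≤ M * M * ‖ι b‖ := by
  refine norm_le_of_forall_norm_inner_le (𝕜 := ℂ) (h.Rmul_mem_closure hb hζ) (by positivity) ?_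
  rintro _ ⟨c, hc, rfl⟩
  have key : ⟪ι c, Rmul b ζ⟫_ℂ = ⟪Rmul c ξ, Rmul b ξ⟫_ℂ := by
    rw [← star_star b, ← h.inner_Rmul_left, h.Rmul_apply, hζξ, star_mul, star_star,
      h.Rmul_mul, ContinuousLinearMap.comp_apply, ← h.inner_Rmul_left]
  calc ‖⟪ι c, Rmul b ζ⟫_ℂ‖ = ‖⟪Rmul c ξ, Rmul b ξ⟫_ℂ‖ := by rw [key]
    _ ≤ ‖Rmul c ξ‖ * ‖Rmul b ξ‖ := norm_inner_le_norm _ _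
    _ ≤ (M * ‖ι c‖) * (M * ‖ι b‖) :=
        mul_le_mul (hξB c hc) (hξB b hb) (norm_nonneg _) (by positivity)
    _ = M * M * ‖ι b‖ * ‖ι c‖ := by ring

theorem norm_Rmul_le_one [CompleteSpace H] (h : IsTracialGNS τ ι Lmul Rmul)
    (hξ : ξ ∈ closure (ι '' B)) (hξB : ∀ b ∈ B, ‖Rmul b ξ‖ ≤ ‖ι b‖) {a : A}
    (ha : ‖ι a‖ ≤ 1) : ‖Rmul a ξ‖ ≤ 1 := by
  let C := {η ∈ closure (ι '' B) | ‖η‖ ≤ ‖ξ‖ ∧ ∀ b ∈ B, ‖Rmul b η‖ ≤ 1 * ‖ι b‖}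
  refine le_one_of_forall_exists_sq_le (C := C) (φ := fun η => ‖Rmul a η‖) ?_ ?_ ξ
    ⟨hξ, le_rfl, by simpa using hξB⟩
  · exact ⟨‖Rmul a‖ * ‖ξ‖, by rintro _ ⟨η, hη, rfl⟩; exact (Rmul a).le_opNorm_of_le hη.2.1⟩
  · rintro η ⟨hη, hηξ, hηB⟩
    obtain ⟨ζ, hζ, hζη, hζη'⟩ := h.exists_star_mul_self hη zero_le_one hηB
    refine ⟨ζ, ⟨hζ, by linarith, fun b hb => ?_⟩, ?_⟩
    · simpa using h.norm_Rmul_le_of_inner_eq hζ zero_le_one hηB hζη' hb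
    · calc ‖Rmul a η‖ ^ 2 ≤ ‖ι a‖ * ‖Rmul a ζ‖ := h.sq_norm_Rmul_le hζη' a
        _ ≤ ‖Rmul a ζ‖ := mul_le_of_le_one_left (norm_nonneg _) ha

theorem norm_Rmul_le [CompleteSpace H] (h : IsTracialGNS τ ι Lmul Rmul)
    (hξ : ξ ∈ closure (ι '' B)) (hM : 0 < M) (hξB : ∀ b ∈ B, ‖Rmul b ξ‖ ≤ M * ‖ι b‖) {a : A}
    (ha : ‖ι a‖ ≤ 1) : ‖Rmul a ξ‖ ≤ M := by
  have hscaled : ‖Rmul a ((M : ℂ)⁻¹ • ξ)‖ ≤ 1 := by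
    refine h.norm_Rmul_le_one (B := B) (map_mem_closure (continuous_const_smul _) hξ ?_)
      (fun b hb => ?_) ha
    · rintro _ ⟨b, hb, rfl⟩
      exact ⟨_, B.smul_mem hb _, map_smul ι _ b⟩
    · rw [map_smul, norm_smul, norm_inv, Complex.norm_real, Real.norm_of_nonneg hM.le,
        inv_mul_le_iff₀ hM]
      exact hξB b hb
  rwa [map_smul, norm_smul, norm_inv, Complex.norm_real, Real.norm_of_nonneg hM.le,
    inv_mul_le_iff₀ hM, mul_one] at hscaled

end Subalgebra

end IsTracialGNS

theorem statement14_general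
    {A H : Type*} [NormedRing A] [StarRing A] [NormedAlgebra ℂ A]
    [StarModule ℂ A]
    [NormedAddCommGroup H] [InnerProductSpace ℂ H] [CompleteSpace H]
    (τ : A →ₗ[ℂ] ℂ)
    (hτtr : ∀ a b : A, τ (a * b) = τ (b * a))
    (ι : A →ₗ[ℂ] H) (hdense : DenseRange ι)
    (hinner : ∀ a b : A, (inner ℂ (ι a) (ι b) : ℂ) = τ (star a * b))
    (Lmul Rmul : A → H →L[ℂ] H)
    (hLmul : ∀ a b : A, Lmul a (ι b) = ι (a * b))
    (hRmul : ∀ a b : A, Rmul a (ι b) = ι (b * a))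
    (B : StarSubalgebra ℂ A)
    (K : Submodule ℂ H)
    (hK : K = (Submodule.map ι (Subalgebra.toSubmodule B.toSubalgebra)).topologicalClosure) :
    {ξ : H | ξ ∈ K ∧ MemLinftyB τ Rmul B ξ} = {ξ : H | ξ ∈ K ∧ MemLinfty τ Rmul ξ} := by
  have h : IsTracialGNS τ ι Lmul Rmul := ⟨hdense, hinner, hτtr, hLmul, hRmul⟩
  have hKι : (K : Set H) = closure (ι '' B) := by
    rw [hK, Submodule.topologicalClosure_coe, Submodule.map_coe]; rfl
  ext ξ
  refine and_congr_right fun hξ => ⟨fun ⟨M₀, hM₀⟩ => ?_, fun ⟨M₀, hM₀⟩ => ⟨M₀, ?_⟩⟩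
  · have hξB : ∀ b ∈ B, ‖Rmul b ξ‖ ≤ max M₀ 1 * ‖ι b‖ := fun b hb =>
      (norm_le_mul_norm_of_norm_le_one (S := Subalgebra.toSubmodule B.toSubalgebra)
        (f := h.Rmulₗ ξ) (g := ι)
        (fun c hc hc1 => hM₀ ⟨c, hc, (h.norm_apply_le_one_iff c).1 hc1, rfl⟩) hb).trans
        (by gcongr; exact le_max_left _ _)
    refine ⟨max M₀ 1, ?_⟩
    rintro _ ⟨a, ha, rfl⟩
    exact h.norm_Rmul_le (hKι ▸ hξ) (lt_max_of_lt_right one_pos) hξB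
      ((h.norm_apply_le_one_iff a).2 ha)
  · rintro _ ⟨b, -, hb, rfl⟩
    exact hM₀ ⟨b, hb, rfl⟩

/-- As subsets of `L²(τ)`, one has `L^∞(τ_B) = L²(τ_B) ∩ L^∞(τ)`: an element
`ξ` of `L²(τ_B)` (the closure `K` of the image of the unital *-subalgebra `B ⊆ A`) whose
multiplications `ξ·b` are bounded over `L²`-contractions `b ∈ B` is automatically bounded over
`L²`-contractions `a ∈ A`. -/
theorem statement14
    {A H : Type*} [NormedRing A] [StarRing A] [CStarRing A] [NormedAlgebra ℂ A]
    [StarModule ℂ A] [CompleteSpace A]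
    [NormedAddCommGroup H] [InnerProductSpace ℂ H] [CompleteSpace H]
    (τ : A →ₗ[ℂ] ℂ)
    (hτpos : ∀ a : A, 0 ≤ (τ (star a * a)).re ∧ (τ (star a * a)).im = 0)
    (hτone : τ 1 = 1)
    (hτtr : ∀ a b : A, τ (a * b) = τ (b * a))
    (ι : A →ₗ[ℂ] H) (hdense : DenseRange ι)
    (hinner : ∀ a b : A, (inner ℂ (ι a) (ι b) : ℂ) = τ (star a * b))
    (Lmul Rmul : A → H →L[ℂ] H)
    (hLmul : ∀ a b : A, Lmul a (ι b) = ι (a * b))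
    (hRmul : ∀ a b : A, Rmul a (ι b) = ι (b * a))
    (B : StarSubalgebra ℂ A)
    (K : Submodule ℂ H)
    (hK : K = (Submodule.map ι (Subalgebra.toSubmodule B.toSubalgebra)).topologicalClosure) :
    {ξ : H | ξ ∈ K ∧ MemLinftyB τ Rmul B ξ} = {ξ : H | ξ ∈ K ∧ MemLinfty τ Rmul ξ} :=
  statement14_general τ hτtr ι hdense hinner Lmul Rmul hLmul hRmul B K hK
end

section
/- For every t > 0 and every z ∈ ℂ with Im z > 0, the Cauchy–Stieltjes transform of the semicircular distribution μ_t equals G(t, z); that is, ∫_ℝ (z − x)⁻¹ dμ_t(x) = (z − √(z² − 4t))/(2t). -/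
/-!
Substituting `x = 2√t cos θ` turns the integral into
`(2/π) ∫₀^π sin²θ / (z - 2√t cos θ) dθ`. Since `G = G(t, z)` solves `t G² - z G + 1 = 0`,
putting `q = √t G` gives `(z - 2√t cos θ) G = 1 - 2q cos θ + q²`, so the integral is `G` times
`(2/π) ∫₀^π sin²θ / (1 - 2q cos θ + q²) dθ`, and the latter equals `1` whenever `‖q‖ < 1`
(an explicit primitive built from that of the Poisson kernel). The branch of the square root
enters only through `‖q‖ < 1`: `G` is the root of smaller modulus, because
`Re (z̄ √(z² - 4t)) = |z|² Re √(1 - 4t/z²) > 0`.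
-/

open MeasureTheory

/-- The semicircular distribution of variance `t` (radius `2√t`): the measure on `ℝ` with
density `x ↦ (2πt)⁻¹ √(max (4t − x²) 0)` with respect to Lebesgue measure. -/
noncomputable def semicircle (t : ℝ) : Measure ℝ :=
  volume.withDensity
    (fun x => ENNReal.ofReal ((2 * Real.pi * t)⁻¹ * Real.sqrt (max (4 * t - x ^ 2) 0)))

/-- The branch `√(z² − 4t) := z·(1 − 4t/z²)^{1/2}` (principal branch of the complex square
root), suited to `Im z > 0`. -/
noncomputable def sqrtShifted (t : ℝ) (z : ℂ) : ℂ :=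
  z * (1 - 4 * (t : ℂ) / z ^ 2) ^ ((1 : ℂ) / 2)

/-- `G(t, z) := (z − √(z² − 4t))/(2t)`. -/
noncomputable def G (t : ℝ) (z : ℂ) : ℂ :=
  (z - sqrtShifted t z) / (2 * (t : ℂ))

namespace Complex

lemma ne_zero_of_im_pos {z : ℂ} (hz : 0 < z.im) : z ≠ 0 := fun h => by simp [h] at hz

lemma re_cpow_one_half_pos {w : ℂ} (hw : w ∈ slitPlane) : 0 < (w ^ (1 / 2 : ℂ)).re := by
  rw [cpow_def_of_ne_zero (slitPlane_ne_zero hw), exp_re]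
  have him : (log w * (1 / 2)).im = w.arg / 2 := by simp [log_im, div_eq_mul_inv]
  have harg : w.arg < Real.pi := arg_lt_pi_iff.mpr (hw.imp le_of_lt id)
  rw [him]
  exact mul_pos (Real.exp_pos _)
    (Real.cos_pos_of_mem_Ioo ⟨by linarith [neg_pi_lt_arg w], by linarith⟩)

lemma re_one_sub_pos_of_norm_lt_one {w : ℂ} (hw : ‖w‖ < 1) : 0 < (1 - w).re := by
  have := re_le_norm w
  simp only [sub_re, one_re]
  linarith

lemma norm_exp_ofReal_mul_of_re_eq_zero {w : ℂ} (hw : w.re = 0) (θ : ℝ) :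
    ‖exp (θ * w)‖ = 1 := by
  simp [norm_exp, hw]

lemma one_sub_mul_exp_mem_slitPlane {q w : ℂ} (hq : ‖q‖ < 1) (hw : w.re = 0) (θ : ℝ) :
    1 - q * exp (θ * w) ∈ slitPlane :=
  Or.inl <| re_one_sub_pos_of_norm_lt_one <| by
    rwa [norm_mul, norm_exp_ofReal_mul_of_re_eq_zero hw, mul_one]

lemma hasDerivAt_log_one_sub_mul_exp {q w : ℂ} (hq : ‖q‖ < 1) (hw : w.re = 0) (θ : ℝ) :
    HasDerivAt (fun s : ℝ => log (1 - q * exp (s * w)))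
      (-(q * (exp (θ * w) * w)) / (1 - q * exp (θ * w))) θ := by
  have hexp : HasDerivAt (fun s : ℝ => exp (s * w)) (exp (θ * w) * w) θ := by
    simpa using ((hasDerivAt_id θ).ofReal_comp.mul_const w).cexp
  exact ((hexp.const_mul q).const_sub 1).clog_real (one_sub_mul_exp_mem_slitPlane hq hw θ)

lemma one_sub_two_mul_cos_add_sq (q : ℂ) (θ : ℝ) :
    1 - 2 * q * Real.cos θ + q ^ 2 = (1 - q * exp (θ * I)) * (1 - q * exp (θ * -I)) := by
  have hprod : exp (θ * I) * exp (θ * -I) = 1 := by rw [← exp_add]; simp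
  have hcos : (Real.cos θ : ℂ) = (exp (θ * I) + exp (θ * -I)) / 2 := by
    rw [ofReal_cos, cos, neg_mul, mul_neg]
  rw [hcos]
  linear_combination (-q ^ 2) * hprod

lemma one_sub_two_mul_cos_add_sq_ne_zero {q : ℂ} (hq : ‖q‖ < 1) (θ : ℝ) :
    1 - 2 * q * Real.cos θ + q ^ 2 ≠ 0 := by
  rw [one_sub_two_mul_cos_add_sq]
  exact mul_ne_zero (slitPlane_ne_zero (one_sub_mul_exp_mem_slitPlane hq (by simp) θ))
    (slitPlane_ne_zero (one_sub_mul_exp_mem_slitPlane hq (by simp) θ))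

/-- Integrates the partial fractions `(1 - q²) / (1 - 2q cos θ + q²) =
1 + q e^{iθ} / (1 - q e^{iθ}) + q e^{-iθ} / (1 - q e^{-iθ})`; for `‖q‖ < 1` both logarithms stay
in the right half-plane, away from the branch cut. -/
noncomputable def poissonPrimitive (q : ℂ) (θ : ℝ) : ℂ :=
  θ + I * log (1 - q * exp (θ * I)) - I * log (1 - q * exp (θ * -I))

lemma hasDerivAt_poissonPrimitive {q : ℂ} (hq : ‖q‖ < 1) (θ : ℝ) :
    HasDerivAt (poissonPrimitive q) ((1 - q ^ 2) / (1 - 2 * q * Real.cos θ + q ^ 2)) θ := by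
  have h₁ := slitPlane_ne_zero (one_sub_mul_exp_mem_slitPlane hq (w := I) (by simp) θ)
  have h₂ := slitPlane_ne_zero (one_sub_mul_exp_mem_slitPlane hq (w := -I) (by simp) θ)
  have hprod : exp (θ * I) * exp (θ * -I) = 1 := by rw [← exp_add]; simp
  have h : HasDerivAt (poissonPrimitive q) _ θ :=
    (((hasDerivAt_id θ).ofReal_comp).add
      ((hasDerivAt_log_one_sub_mul_exp hq (w := I) (by simp) θ).const_mul I)).sub
      ((hasDerivAt_log_one_sub_mul_exp hq (w := -I) (by simp) θ).const_mul I)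
  refine h.congr_deriv ?_
  rw [one_sub_two_mul_cos_add_sq, ofReal_one]
  generalize exp (θ * I) = a at *
  generalize exp (θ * -I) = b at *
  field_simp
  linear_combination (-q ^ 2) * hprod + (2 * q ^ 2 * a * b - q * a - q * b) * I_sq

lemma poissonPrimitive_zero (q : ℂ) : poissonPrimitive q 0 = 0 := by
  simp [poissonPrimitive]

lemma poissonPrimitive_pi (q : ℂ) : poissonPrimitive q Real.pi = Real.pi := by
  have h₁ : exp (Real.pi * I) = -1 := exp_pi_mul_I
  simp [poissonPrimitive, h₁]

lemma integral_sin_sq_div_one_sub_two_mul_cos_add_sq {q : ℂ} (hq : ‖q‖ < 1) (hq0 : q ≠ 0) :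
    ∫ θ in (0 : ℝ)..Real.pi, (Real.sin θ : ℂ) ^ 2 / (1 - 2 * q * Real.cos θ + q ^ 2)
      = (Real.pi : ℂ) / 2 := by
  -- `sin² θ / D = cos θ / (2q) + (1 + q²) / (4q²) - (1 - q²)² / (4q² D)`, `D = 1 - 2q cos θ + q²`
  have hF : ∀ θ : ℝ, HasDerivAt
      (fun s : ℝ => (Real.sin s : ℂ) / (2 * q) + (1 + q ^ 2) / (4 * q ^ 2) * s
        - (1 - q ^ 2) / (4 * q ^ 2) * poissonPrimitive q s)
      ((Real.sin θ : ℂ) ^ 2 / (1 - 2 * q * Real.cos θ + q ^ 2)) θ := by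
    intro θ
    refine ((((Real.hasDerivAt_sin θ).ofReal_comp.div_const (2 * q)).add
      ((hasDerivAt_id θ).ofReal_comp.const_mul _)).sub
      ((hasDerivAt_poissonPrimitive hq θ).const_mul _)).congr_deriv ?_
    have hD := one_sub_two_mul_cos_add_sq_ne_zero hq θ
    have hsin : (Real.sin θ : ℂ) ^ 2 = 1 - (Real.cos θ : ℂ) ^ 2 := by
      rw [← ofReal_pow, ← ofReal_pow, Real.sin_sq]; push_cast; ring
    rw [hsin, ofReal_one]
    generalize (Real.cos θ : ℂ) = c at hD ⊢
    generalize hD' : 1 - 2 * q * c + q ^ 2 = D at hD ⊢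
    field_simp
    rw [← hD']
    ring
  have hcont : Continuous fun θ : ℝ =>
      (Real.sin θ : ℂ) ^ 2 / (1 - 2 * q * Real.cos θ + q ^ 2) :=
    Continuous.div (by fun_prop) (by fun_prop) (one_sub_two_mul_cos_add_sq_ne_zero hq)
  rw [intervalIntegral.integral_eq_sub_of_hasDerivAt (fun θ _ => hF θ)
    (hcont.intervalIntegrable _ _)]
  simp only [poissonPrimitive_zero, poissonPrimitive_pi, Real.sin_zero, Real.sin_pi,
    ofReal_zero]
  field_simp
  ring

end Complex

noncomputable def semicircleDensity (t x : ℝ) : ℝ :=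
  (2 * Real.pi * t)⁻¹ * Real.sqrt (max (4 * t - x ^ 2) 0)

section SemicircleIntegral

variable {E : Type*} [NormedAddCommGroup E] [NormedSpace ℝ E] {t : ℝ}

lemma continuous_semicircleDensity (t : ℝ) : Continuous (semicircleDensity t) := by
  unfold semicircleDensity
  fun_prop

lemma semicircleDensity_eq_zero (ht : 0 ≤ t) {x : ℝ}
    (hx : x ∉ Set.Icc (-(2 * √t)) (2 * √t)) : semicircleDensity t x = 0 := by
  have hx' : 2 * √t < |x| := by
    rw [Set.mem_Icc, ← abs_le] at hx
    exact not_le.mp hx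
  have : 4 * t - x ^ 2 ≤ 0 := by
    nlinarith [Real.sq_sqrt ht, sq_abs x, Real.sqrt_nonneg t]
  simp [semicircleDensity, max_eq_right this]

lemma semicircle_eq_withDensity (t : ℝ) :
    semicircle t = volume.withDensity (fun x => ENNReal.ofReal (semicircleDensity t x)) :=
  rfl

lemma integral_semicircle_eq_intervalIntegral (ht : 0 ≤ t) (f : ℝ → E) :
    ∫ x, f x ∂semicircle t = ∫ x in -(2 * √t)..2 * √t, semicircleDensity t x • f x := by
  have hnonneg : ∀ x, 0 ≤ semicircleDensity t x := fun x => by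
    unfold semicircleDensity; positivity
  rw [semicircle_eq_withDensity, integral_withDensity_eq_integral_toReal_smul
      (continuous_semicircleDensity t).measurable.ennreal_ofReal
      (Filter.Eventually.of_forall fun _ => ENNReal.ofReal_lt_top),
    intervalIntegral.integral_of_le (by linarith [Real.sqrt_nonneg t]),
    ← integral_Icc_eq_integral_Ioc,
    setIntegral_eq_integral_of_forall_compl_eq_zero]
  · simp_rw [ENNReal.toReal_ofReal (hnonneg _)]
  · intro x hx
    simp [semicircleDensity_eq_zero ht hx]

lemma semicircleDensity_two_mul_sqrt_mul_cos (ht : 0 < t) {θ : ℝ} (hθ : θ ∈ Set.Icc 0 Real.pi) :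
    semicircleDensity t (2 * √t * Real.cos θ) = (Real.pi * √t)⁻¹ * Real.sin θ := by
  have hsin := Real.sin_nonneg_of_nonneg_of_le_pi hθ.1 hθ.2
  have hst := Real.sq_sqrt ht.le
  have h : 4 * t - (2 * √t * Real.cos θ) ^ 2 = (2 * √t * Real.sin θ) ^ 2 := by
    nlinarith [Real.sin_sq_add_cos_sq θ]
  rw [semicircleDensity, h, max_eq_left (sq_nonneg _), Real.sqrt_sq (by positivity)]
  have : √t ≠ 0 := (Real.sqrt_pos.mpr ht).ne'
  field_simp
  rw [hst]

lemma integral_semicircle_eq_integral_sin_sq (ht : 0 < t) {f : ℝ → E} (hf : Continuous f) :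
    ∫ x, f x ∂semicircle t
      = (2 / Real.pi) • ∫ θ in (0 : ℝ)..Real.pi, Real.sin θ ^ 2 • f (2 * √t * Real.cos θ) := by
  have hsub := intervalIntegral.integral_deriv_smul_comp (a := 0) (b := Real.pi)
    (g := fun x => semicircleDensity t x • f x)
    (fun θ _ => (Real.hasDerivAt_cos θ).const_mul (2 * √t)) (by fun_prop)
    ((continuous_semicircleDensity t).smul hf)
  simp only [Real.cos_zero, Real.cos_pi, mul_one, mul_neg_one] at hsub
  rw [integral_semicircle_eq_intervalIntegral ht.le, intervalIntegral.integral_symm, ← hsub,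
    ← intervalIntegral.integral_neg, ← intervalIntegral.integral_smul]
  refine intervalIntegral.integral_congr fun θ hθ => ?_
  rw [Set.uIcc_of_le Real.pi_pos.le] at hθ
  simp only [Function.comp, semicircleDensity_two_mul_sqrt_mul_cos ht hθ, smul_smul, ← neg_smul]
  congr 1
  have : √t ≠ 0 := (Real.sqrt_pos.mpr ht).ne'
  field_simp

end SemicircleIntegral

open Complex ComplexConjugate

section CauchyTransform

variable {t : ℝ} {z : ℂ}

lemma one_sub_div_sq_mem_slitPlane (ht : 0 < t) (hz : 0 < z.im) :
    1 - 4 * (t : ℂ) / z ^ 2 ∈ slitPlane := by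
  have hN : 0 < normSq (z * z) := normSq_pos.mpr (mul_self_ne_zero.mpr (ne_zero_of_im_pos hz))
  rw [mem_slitPlane_iff, sub_re, one_re, sub_im, one_im, div_re, div_im]
  simp only [mul_re, mul_im, ofReal_re, ofReal_im, re_ofNat, im_ofNat, pow_two]
  by_cases hre : z.re = 0
  · left
    have : 0 ≤ 4 * t * (z.im * z.im) / normSq (z * z) := by positivity
    simp only [hre]
    ring_nf at this ⊢
    linarith
  · right
    exact ne_of_eq_of_ne (by ring)
      (div_ne_zero (a := 8 * t * z.re * z.im) (by simp [ht.ne', hre, hz.ne']) hN.ne')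

lemma sqrtShifted_sq (t : ℝ) (hz : z ≠ 0) : sqrtShifted t z ^ 2 = z ^ 2 - 4 * t := by
  rw [sqrtShifted, mul_pow, one_div, cpow_ofNat_inv_pow]
  field_simp

lemma sub_sqrtShifted_mul_add (t : ℝ) (hz : z ≠ 0) :
    (z - sqrtShifted t z) * (z + sqrtShifted t z) = 4 * t := by
  linear_combination -sqrtShifted_sq t hz

lemma G_ne_zero (ht : 0 < t) (hz : 0 < z.im) : G t z ≠ 0 := by
  refine div_ne_zero (fun h => ?_) (by simp [ht.ne'])
  have := sub_sqrtShifted_mul_add t (ne_zero_of_im_pos hz)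
  rw [h, zero_mul] at this
  exact ht.ne' (by exact_mod_cast (mul_eq_zero.mp this.symm).resolve_left (by norm_num))

lemma norm_sub_sqrtShifted_lt (ht : 0 < t) (hz : 0 < z.im) :
    ‖z - sqrtShifted t z‖ < ‖z + sqrtShifted t z‖ := by
  have hre : 0 < (z * conj (sqrtShifted t z)).re := by
    rw [sqrtShifted, map_mul, ← mul_assoc, mul_conj, re_ofReal_mul, conj_re]
    exact mul_pos (normSq_pos.mpr (ne_zero_of_im_pos hz))
      (re_cpow_one_half_pos (one_sub_div_sq_mem_slitPlane ht hz))
  rw [← sq_lt_sq₀ (norm_nonneg _) (norm_nonneg _), ← normSq_eq_norm_sq, ← normSq_eq_norm_sq,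
    normSq_sub, normSq_add]
  linarith

lemma norm_sqrt_mul_G_lt_one (ht : 0 < t) (hz : 0 < z.im) : ‖(√t : ℂ) * G t z‖ < 1 := by
  have hprod : ‖z - sqrtShifted t z‖ * ‖z + sqrtShifted t z‖ = 4 * t := by
    rw [← norm_mul, sub_sqrtShifted_mul_add t (ne_zero_of_im_pos hz)]
    simp [abs_of_pos ht]
  have hlt := norm_sub_sqrtShifted_lt ht hz
  have hst := Real.sq_sqrt ht.le
  have hsub : ‖z - sqrtShifted t z‖ < 2 * √t := by
    nlinarith [norm_nonneg (z - sqrtShifted t z), Real.sqrt_pos.mpr ht]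
  rw [G, norm_mul, norm_div, norm_mul]
  simp only [norm_real, Real.norm_eq_abs, abs_of_nonneg (Real.sqrt_nonneg t),
    abs_of_pos ht, norm_ofNat]
  rw [mul_div_assoc', div_lt_one (by positivity)]
  nlinarith [Real.sqrt_pos.mpr ht]

lemma mul_G_eq (ht : t ≠ 0) (hz : z ≠ 0) : z * G t z = 1 + t * G t z ^ 2 := by
  have hs := sqrtShifted_sq t hz
  have ht' : (t : ℂ) ≠ 0 := by exact_mod_cast ht
  rw [G]
  field_simp
  linear_combination -hs

lemma sub_two_sqrt_mul_mul_G (ht : 0 < t) (hz : z ≠ 0) (c : ℂ) :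
    (z - 2 * √t * c) * G t z = 1 - 2 * (√t * G t z) * c + (√t * G t z) ^ 2 := by
  have hst : ((√t : ℝ) : ℂ) ^ 2 = t := by exact_mod_cast Real.sq_sqrt ht.le
  linear_combination mul_G_eq ht.ne' hz - G t z ^ 2 * hst

lemma inv_sub_eq_G_div (ht : 0 < t) (hz : 0 < z.im) (y : ℝ) :
    (z - ↑(2 * √t * y))⁻¹ = G t z / (1 - 2 * (√t * G t z) * y + (√t * G t z) ^ 2) := by
  rw [← sub_two_sqrt_mul_mul_G ht (ne_zero_of_im_pos hz), div_mul_cancel_right₀ (G_ne_zero ht hz)]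
  push_cast
  ring

end CauchyTransform

/-- For every `t > 0` and every `z ∈ ℂ` with `Im z > 0`, the Cauchy–Stieltjes
transform of the semicircular distribution `μ_t` equals `G(t, z)`:
`∫ (z − x)⁻¹ dμ_t(x) = (z − √(z² − 4t))/(2t)`. -/
theorem statement17 (t : ℝ) (ht : 0 < t) (z : ℂ) (hz : 0 < z.im) :
    ∫ x : ℝ, (z - (x : ℂ))⁻¹ ∂(semicircle t) = G t z := by
  set q : ℂ := √t * G t z
  have hq0 : q ≠ 0 :=
    mul_ne_zero (by exact_mod_cast (Real.sqrt_pos.mpr ht).ne') (G_ne_zero ht hz)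
  have hzx : ∀ x : ℝ, z - x ≠ 0 := fun x h => hz.ne' (by simpa using congrArg im h)
  have hpt : ∀ θ : ℝ, Real.sin θ ^ 2 • (z - ↑(2 * √t * Real.cos θ))⁻¹
      = G t z * ((Real.sin θ : ℂ) ^ 2 / (1 - 2 * q * Real.cos θ + q ^ 2)) := fun θ => by
    rw [inv_sub_eq_G_div ht hz, real_smul]
    push_cast
    ring
  rw [integral_semicircle_eq_integral_sin_sq ht (f := fun x : ℝ => (z - (x : ℂ))⁻¹)
    ((continuous_const.sub continuous_ofReal).inv₀ hzx)]
  simp_rw [hpt]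
  rw [intervalIntegral.integral_const_mul,
    integral_sin_sq_div_one_sub_two_mul_cos_add_sq (norm_sqrt_mul_G_lt_one ht hz) hq0, real_smul]
  push_cast
  field_simp
end

section
/- For every t > 0 and every z ∈ ℂ with Im z > 0 and |z| > √t, the point w := z + t/z satisfies Im w > 0, the square root satisfies √(w² − 4t) = z − t/z, and consequently G(t, w) = 1/z; i.e., along the characteristic curve w = z + t/z the function G is constant: G(t, z + t/z) = G(0⁺, z) = 1/z. -/
open MeasureTheory

/-!
With `w = z + t/z` one has `w² − 4t = (z − t/z)²`, so `1 − 4t/w² = s²` for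
`s = (z − t/z)/w = (z² − t)/(z² + t)`. When `|t| < |z|²`, the Möbius map `a ↦ (a − t)/(a + t)`
sends `a = z²` into the right half-plane, where the principal square root inverts squaring;
hence `√(w² − 4t) = w s = z − t/z` and `G(t, w) = (w − (z − t/z))/(2t) = 1/z`.
-/

namespace Complex

lemma im_add_ofReal_div (t : ℝ) (z : ℂ) :
    (z + t / z).im = z.im * (1 - t / ‖z‖ ^ 2) := by
  simp only [add_im, div_im, ofReal_re, ofReal_im, normSq_eq_norm_sq]
  ring

lemma im_add_ofReal_div_pos {t : ℝ} {z : ℂ} (hz : 0 < z.im) (ht : t < ‖z‖ ^ 2) :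
    0 < (z + t / z).im := by
  have hnorm : 0 < ‖z‖ ^ 2 := by
    have : z ≠ 0 := fun h => by simp [h] at hz
    positivity
  rw [im_add_ofReal_div]
  exact mul_pos hz (sub_pos.mpr ((div_lt_one hnorm).mpr ht))

lemma add_ofReal_ne_zero_of_abs_lt {a : ℂ} {r : ℝ} (h : |r| < ‖a‖) : a + r ≠ 0 := by
  intro h0
  rw [add_eq_zero_iff_eq_neg.mp h0, norm_neg, norm_real, Real.norm_eq_abs] at h
  exact lt_irrefl _ h

lemma ne_zero_of_abs_lt_norm_sq {t : ℝ} {z : ℂ} (h : |t| < ‖z‖ ^ 2) : z ≠ 0 := by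
  rintro rfl
  simp only [norm_zero, ne_eq, OfNat.ofNat_ne_zero, not_false_eq_true, zero_pow] at h
  exact (abs_nonneg t).not_gt h

lemma re_sub_ofReal_div_add_ofReal (a : ℂ) (r : ℝ) :
    ((a - r) / (a + r)).re = (‖a‖ ^ 2 - r ^ 2) / ‖a + r‖ ^ 2 := by
  rw [div_re, ← add_div, ← normSq_eq_norm_sq, ← normSq_eq_norm_sq, normSq_apply a]
  simp only [sub_re, add_re, sub_im, add_im, ofReal_re, ofReal_im]
  ring

lemma re_sub_ofReal_div_add_ofReal_pos {a : ℂ} {r : ℝ} (h : |r| < ‖a‖) :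
    0 < ((a - r) / (a + r)).re := by
  rw [re_sub_ofReal_div_add_ofReal]
  have : r ^ 2 < ‖a‖ ^ 2 :=
    sq_lt_sq' (by linarith [neg_abs_le r]) (by linarith [le_abs_self r])
  exact div_pos (by linarith) (pow_pos (norm_pos_iff.mpr (add_ofReal_ne_zero_of_abs_lt h)) 2)

end Complex

open Complex

lemma sqrtShifted_add_ofReal_div {t : ℝ} {z : ℂ} (h : |t| < ‖z‖ ^ 2) :
    sqrtShifted t (z + t / z) = z - t / z := by
  have hz : z ≠ 0 := ne_zero_of_abs_lt_norm_sq h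
  have hsq : |t| < ‖z ^ 2‖ := by rwa [norm_pow]
  have hsum : z ^ 2 + t ≠ 0 := add_ofReal_ne_zero_of_abs_lt hsq
  have hsquare : 1 - 4 * (t : ℂ) / (z + t / z) ^ 2 = ((z ^ 2 - t) / (z ^ 2 + t)) ^ 2 := by
    field_simp
    ring
  rw [sqrtShifted, hsquare, one_div, sq_cpow_two_inv (re_sub_ofReal_div_add_ofReal_pos hsq)]
  field_simp

lemma G_add_ofReal_div {t : ℝ} (ht : t ≠ 0) {z : ℂ} (h : |t| < ‖z‖ ^ 2) :
    G t (z + t / z) = 1 / z := by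
  have hz : z ≠ 0 := ne_zero_of_abs_lt_norm_sq h
  have ht' : (t : ℂ) ≠ 0 := ofReal_ne_zero.mpr ht
  rw [G, sqrtShifted_add_ofReal_div h]
  field_simp
  ring

/-- For every `t > 0` and every `z ∈ ℂ` with `Im z > 0` and `|z| > √t`, the
point `w := z + t/z` satisfies `Im w > 0`, the square root satisfies `√(w² − 4t) = z − t/z`,
and consequently `G` is constant along the characteristic curve: `G(t, z + t/z) = 1/z`. -/
theorem statement19 (t : ℝ) (ht : 0 < t) (z : ℂ) (hz : 0 < z.im)
    (habs : Real.sqrt t < ‖z‖) :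
    0 < (z + (t : ℂ) / z).im ∧
    sqrtShifted t (z + (t : ℂ) / z) = z - (t : ℂ) / z ∧
    G t (z + (t : ℂ) / z) = 1 / z := by
  have hnorm : t < ‖z‖ ^ 2 := Real.lt_sq_of_sqrt_lt habs
  have habs' : |t| < ‖z‖ ^ 2 := by rwa [abs_of_pos ht]
  exact ⟨im_add_ofReal_div_pos hz hnorm, sqrtShifted_add_ofReal_div habs',
    G_add_ofReal_div ht.ne' habs'⟩
end
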